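/- arXiv:1304.3284 — 7 statements merged into one kernel-verified Lean document; each statement's English description precedes it below -/
import Mathlib

section
/- Let (S, 𝒮, μ) be a σ-finite measure space and let ζ, β, η : S → (0,∞) be measurable functions with ∫ ζβ dμ < ∞ and ∫ ηβ dμ < ∞, both integrals strictly positive. Suppose that for every measurable γ : S → ℝ with |γ| ≤ β and ∫ ζγ dμ = 0 one has ∫ ηγ dμ = 0. Then ζ = (∫ζβ dμ / ∫ηβ dμ) · η, μ-almost everywhere. -/
/-!
Testing with `γ = β (1_A - P[A])`, where `P` is the probability measure with density proportional
to `ζβ`, gives `∫ ζγ = 0`, hence `∫ ηγ = 0`, i.e. `Q[A] = P[A]` for the probability measure `Q`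
with density proportional to `ηβ`. So `ζβ` and `ηβ` are proportional almost everywhere, and
dividing by `β > 0` gives the claim.
-/

open MeasureTheory

lemma abs_indicator_one_sub_le_one {S : Type*} {A : Set S} {c : ℝ} (hc₀ : 0 ≤ c) (hc₁ : c ≤ 1)
    (s : S) :
    |A.indicator 1 s - c| ≤ 1 :=
  abs_sub_le_of_nonneg_of_le (Set.indicator_nonneg (fun _ _ => zero_le_one) s)
    (Set.indicator_apply_le' (fun _ => le_rfl) (fun _ => zero_le_one)) hc₀ hc₁

section TestDirections

variable {S : Type*} [MeasurableSpace S] {μ : Measure S}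

lemma integral_indicator_one_sub_const_mul {g : S → ℝ} (hg : Integrable g μ) {A : Set S}
    (hA : MeasurableSet A) (c : ℝ) :
    ∫ s, (A.indicator 1 s - c) * g s ∂μ = ∫ s in A, g s ∂μ - c * ∫ s, g s ∂μ := by
  have hsplit : (fun s => (A.indicator 1 s - c) * g s) = fun s => A.indicator g s - c * g s := by
    funext s
    rw [sub_mul, ← Set.indicator_mul_left]
    simp only [Pi.one_apply, one_mul]
  rw [hsplit, integral_sub (hg.indicator hA) (hg.const_mul c), integral_indicator hA,
    integral_const_mul]

theorem integral_mul_setIntegral_eq_of_forall_integral_mul_eq_zero {g h : S → ℝ}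
    (hg : Integrable g μ) (hh : Integrable h μ) (hg₀ : 0 ≤ g) (hg_pos : 0 < ∫ s, g s ∂μ)
    (htest : ∀ φ : S → ℝ, Measurable φ → (∀ s, |φ s| ≤ 1) →
      ∫ s, φ s * g s ∂μ = 0 → ∫ s, φ s * h s ∂μ = 0)
    {A : Set S} (hA : MeasurableSet A) :
    (∫ s, g s ∂μ) * ∫ s in A, h s ∂μ = (∫ s, h s ∂μ) * ∫ s in A, g s ∂μ := by
  set c := (∫ s in A, g s ∂μ) / ∫ s, g s ∂μ with hc
  have hc₀ : 0 ≤ c := div_nonneg (setIntegral_nonneg hA fun s _ => hg₀ s) hg_pos.le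
  have hc₁ : c ≤ 1 :=
    (div_le_one hg_pos).2 (setIntegral_le_integral hg (Filter.Eventually.of_forall hg₀))
  have hg_orth : ∫ s, (A.indicator 1 s - c) * g s ∂μ = 0 := by
    rw [integral_indicator_one_sub_const_mul hg hA, hc, div_mul_cancel₀ _ hg_pos.ne', sub_self]
  have hh_orth := htest (fun s => A.indicator 1 s - c)
    ((measurable_one.indicator hA).sub measurable_const) (abs_indicator_one_sub_le_one hc₀ hc₁)
    hg_orth
  rw [integral_indicator_one_sub_const_mul hh hA, sub_eq_zero] at hh_orth
  rw [hh_orth, hc]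
  field_simp

end TestDirections

theorem proportional_of_test_directions_general
    {S : Type*} [MeasurableSpace S] (μ : Measure S)
    (ζ β η : S → ℝ) (hβm : Measurable β)
    (hζpos : ∀ s, 0 < ζ s) (hβpos : ∀ s, 0 < β s)
    (hζβ : Integrable (fun s => ζ s * β s) μ)
    (hηβ : Integrable (fun s => η s * β s) μ)
    (hζβpos : 0 < ∫ s, ζ s * β s ∂μ)
    (hηβpos : 0 < ∫ s, η s * β s ∂μ)
    (htest : ∀ γ : S → ℝ, Measurable γ → (∀ s, |γ s| ≤ β s) →
      (∫ s, ζ s * γ s ∂μ) = 0 → (∫ s, η s * γ s ∂μ) = 0) :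
    ζ =ᵐ[μ] fun s => ((∫ s, ζ s * β s ∂μ) / (∫ s, η s * β s ∂μ)) * η s := by
  set I := ∫ s, ζ s * β s ∂μ
  set J := ∫ s, η s * β s ∂μ
  have htest_unit : ∀ φ : S → ℝ, Measurable φ → (∀ s, |φ s| ≤ 1) →
      ∫ s, φ s * (ζ s * β s) ∂μ = 0 → ∫ s, φ s * (η s * β s) ∂μ = 0 := by
    intro φ hφm hφ hζφ
    have hγ : ∀ s, |φ s * β s| ≤ β s := fun s => by
      rw [abs_mul, abs_of_pos (hβpos s)]
      exact mul_le_of_le_one_left (hβpos s).le (hφ s)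
    simp only [mul_left_comm (φ _)] at hζφ ⊢
    exact htest (fun s => φ s * β s) (hφm.mul hβm) hγ hζφ
  have hsetIntegral : ∀ A, MeasurableSet A →
      ∫ s in A, ζ s * β s ∂μ = ∫ s in A, I / J * (η s * β s) ∂μ := by
    intro A hA
    have hprop := integral_mul_setIntegral_eq_of_forall_integral_mul_eq_zero hζβ hηβ
      (fun s => (mul_pos (hζpos s) (hβpos s)).le) hζβpos htest_unit hA
    rw [integral_const_mul]
    field_simp
    linarith
  have hae : (fun s => ζ s * β s) =ᵐ[μ] fun s => I / J * (η s * β s) :=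
    hζβ.ae_eq_of_forall_setIntegral_eq _ _ (hηβ.const_mul _) fun A hA _ => hsetIntegral A hA
  filter_upwards [hae] with s hs
  exact mul_right_cancel₀ (hβpos s).ne' (by rw [hs, mul_assoc])

/-- On a σ-finite measure space, if `ζ, β, η > 0` are measurable with
`∫ ζβ dμ < ∞` and `∫ ηβ dμ < ∞` (both integrals strictly positive), and if every
measurable `γ` with `|γ| ≤ β` and `∫ ζγ dμ = 0` satisfies `∫ ηγ dμ = 0`, then
`ζ = (∫ζβ dμ / ∫ηβ dμ) · η` μ-a.e. -/
theorem proportional_of_test_directions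
    {S : Type*} [MeasurableSpace S] (μ : Measure S) [SigmaFinite μ]
    (ζ β η : S → ℝ) (hζm : Measurable ζ) (hβm : Measurable β) (hηm : Measurable η)
    (hζpos : ∀ s, 0 < ζ s) (hβpos : ∀ s, 0 < β s) (hηpos : ∀ s, 0 < η s)
    (hζβ : Integrable (fun s => ζ s * β s) μ)
    (hηβ : Integrable (fun s => η s * β s) μ)
    (hζβpos : 0 < ∫ s, ζ s * β s ∂μ)
    (hηβpos : 0 < ∫ s, η s * β s ∂μ)
    (htest : ∀ γ : S → ℝ, Measurable γ → (∀ s, |γ s| ≤ β s) →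
      (∫ s, ζ s * γ s ∂μ) = 0 → (∫ s, η s * γ s ∂μ) = 0) :
    ζ =ᵐ[μ] fun s => ((∫ s, ζ s * β s ∂μ) / (∫ s, η s * β s ∂μ)) * η s :=
  proportional_of_test_directions_general μ ζ β η hβm hζpos hβpos hζβ hηβ hζβpos hηβpos htest
end

section
/- Let U_1,...,U_M : (0,∞) → ℝ be strictly increasing, strictly concave, continuously differentiable, and satisfy the Inada conditions. Then for each fixed w in the interior of the simplex Σ^M, the aggregate utility function c ↦ U(w,c) = sup{ Σ_m w^m U_m(c^m) : c^m ≥ 0, Σ_m c^m = c } is itself strictly increasing, strictly concave, continuously differentiable on (0,∞), and satisfies the Inada conditions: U_c(w,c) → 0 as c → ∞ and U_c(w,c) → ∞ as c → 0+. -/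
open Finset

/-- Standing assumptions on a utility function `U` with derivative `U'`:
strictly increasing, strictly concave, continuously differentiable on `(0,∞)`,
satisfying the Inada conditions. -/
def StandingAssumptions (U U' : ℝ → ℝ) : Prop :=
  StrictMonoOn U (Set.Ioi (0 : ℝ)) ∧ StrictConcaveOn ℝ (Set.Ioi (0 : ℝ)) U ∧
  (∀ c : ℝ, 0 < c → HasDerivAt U (U' c) c) ∧ ContinuousOn U' (Set.Ioi (0 : ℝ)) ∧
  Filter.Tendsto U' Filter.atTop (nhds 0) ∧
  Filter.Tendsto U' (nhdsWithin 0 (Set.Ioi (0 : ℝ))) Filter.atTop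

/-!
By the Inada conditions each weighted marginal utility `x ↦ w^m U_m'(x)` is a strictly decreasing
bijection of `(0,∞)` onto itself; so is its inverse `ψ_m`, the demand of agent `m` at the price
`λ`, and so is the aggregate demand `λ ↦ ∑ ψ_m(λ)`, whose inverse `Λ` is the Lagrange multiplier of
the allocation problem. The tangent-line inequalities of the concave `U_m` show that the allocation
`ψ(Λ(c))` is optimal and that `Λ(c)` is a supergradient of `U(w,·)` at `c`. A concave function
with a continuous choice of supergradients is differentiable with exactly that derivative, and `Λ`
inherits positivity, strict monotonicity, continuity and the Inada limits from being a strictly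
decreasing bijection of `(0,∞)`.
-/

open Set Filter Topology

structure IsStrictAntiBijIoi (f : ℝ → ℝ) : Prop where
  strictAntiOn : StrictAntiOn f (Ioi 0)
  mapsTo : MapsTo f (Ioi 0) (Ioi 0)
  surjOn : SurjOn f (Ioi 0) (Ioi 0)

namespace IsStrictAntiBijIoi

variable {f : ℝ → ℝ}

lemma of_tendsto (hanti : StrictAntiOn f (Ioi 0)) (hcont : ContinuousOn f (Ioi 0))
    (htop : Tendsto f atTop (𝓝 0)) (hzero : Tendsto f (𝓝[>] 0) atTop) :
    IsStrictAntiBijIoi f where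
  strictAntiOn := hanti
  mapsTo x hx := by
    have hx1 : (0 : ℝ) < x + 1 := by linarith [mem_Ioi.1 hx]
    have hlim : 0 ≤ f (x + 1) := le_of_tendsto htop <| by
      filter_upwards [eventually_gt_atTop (x + 1)] with t ht
      exact (hanti hx1 (hx1.trans ht) ht).le
    exact hlim.trans_lt (hanti hx hx1 (lt_add_one x))
  surjOn y hy := by
    obtain ⟨a, hfa, ha⟩ := ((hzero.eventually_ge_atTop y).and eventually_mem_nhdsWithin).exists
    obtain ⟨b, hfb, hab⟩ := ((htop.eventually_lt_const hy).and (eventually_ge_atTop a)).exists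
    have hsub : Icc a b ⊆ Ioi 0 := fun t ht => lt_of_lt_of_le ha ht.1
    obtain ⟨x, hx, rfl⟩ := intermediate_value_Icc' hab (hcont.mono hsub) ⟨hfb.le, hfa⟩
    exact ⟨x, hsub hx, rfl⟩

variable (hf : IsStrictAntiBijIoi f)
include hf

lemma continuousOn : ContinuousOn f (Ioi 0) := by
  intro x hx
  have himage : (fun x => -f x) '' Ioi (0 : ℝ) = Iio (0 : ℝ) := by
    rw [← image_image (fun y => -y) f, hf.surjOn.image_eq_of_mapsTo hf.mapsTo, Set.image_neg_eq_neg,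
      neg_Ioi, neg_zero]
  have hneg := hf.strictAntiOn.neg.continuousAt_of_image_mem_nhds (Ioi_mem_nhds hx)
    (himage ▸ Iio_mem_nhds (neg_neg_of_pos (hf.mapsTo hx)))
  exact (continuousAt_neg_iff.1 hneg).continuousWithinAt

lemma tendsto_atTop : Tendsto f atTop (𝓝 0) := by
  refine tendsto_order.2 ⟨fun a ha => ?_, fun ε hε => ?_⟩
  · filter_upwards [eventually_gt_atTop 0] with x hx
    exact ha.trans (hf.mapsTo hx)
  · obtain ⟨x, hx, rfl⟩ := hf.surjOn hε
    filter_upwards [eventually_gt_atTop x] with y hy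
    exact hf.strictAntiOn hx (lt_trans hx hy) hy

lemma tendsto_nhdsGT_zero : Tendsto f (𝓝[>] 0) atTop := by
  refine Filter.tendsto_atTop.2 fun b => ?_
  obtain ⟨x, hx, hfx⟩ := hf.surjOn (show (0 : ℝ) < max b 1 from lt_max_of_lt_right one_pos)
  filter_upwards [Ioo_mem_nhdsGT hx] with y hy
  exact (le_max_left b 1).trans (hfx ▸ (hf.strictAntiOn hy.1 hx hy.2).le)

lemma apply_invFunOn {y : ℝ} (hy : 0 < y) : f (Function.invFunOn f (Ioi 0) y) = y :=
  hf.surjOn.rightInvOn_invFunOn hy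

lemma invFunOn : IsStrictAntiBijIoi (Function.invFunOn f (Ioi 0)) := by
  have hmaps := hf.surjOn.mapsTo_invFunOn
  refine ⟨fun y hy y' hy' hyy' => ?_, hmaps, fun x hx => ⟨f x, hf.mapsTo hx, ?_⟩⟩
  · rwa [← hf.strictAntiOn.lt_iff_gt (hmaps hy) (hmaps hy'), hf.apply_invFunOn hy,
      hf.apply_invFunOn hy']
  · exact hf.strictAntiOn.injOn (hmaps (hf.mapsTo hx)) hx (hf.apply_invFunOn (hf.mapsTo hx))

omit hf in
lemma sum {ι : Type*} [Fintype ι] [Nonempty ι] {f : ι → ℝ → ℝ}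
    (hf : ∀ i, IsStrictAntiBijIoi (f i)) : IsStrictAntiBijIoi (fun x => ∑ i, f i x) := by
  refine of_tendsto (fun x hx y hy hxy => Finset.sum_lt_sum_of_nonempty Finset.univ_nonempty
      fun i _ => (hf i).strictAntiOn hx hy hxy)
    (continuousOn_finsetSum _ fun i _ => (hf i).continuousOn) ?_ ?_
  · simpa using tendsto_finsetSum Finset.univ fun i _ => (hf i).tendsto_atTop
  · obtain ⟨i⟩ := ‹Nonempty ι›
    refine tendsto_atTop_mono' _ ?_ (hf i).tendsto_nhdsGT_zero
    filter_upwards [self_mem_nhdsWithin] with x hx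
    exact Finset.single_le_sum (f := fun j => f j x) (fun j _ => le_of_lt ((hf j).mapsTo hx)) (Finset.mem_univ i)

end IsStrictAntiBijIoi

lemma ConcaveOn.le_add_mul_sub_of_hasDerivAt {S : Set ℝ} {f : ℝ → ℝ} {f' x y : ℝ}
    (hf : ConcaveOn ℝ S f) (hx : x ∈ S) (hy : y ∈ S) (hd : HasDerivAt f f' x) :
    f y ≤ f x + f' * (y - x) := by
  rcases lt_trichotomy x y with hxy | rfl | hyx
  · have h := hf.slope_le_of_hasDerivAt hx hy hxy hd
    rw [slope_def_field, div_le_iff₀ (sub_pos.2 hxy)] at h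
    linarith
  · simp
  · have h := hf.le_slope_of_hasDerivAt hy hx hyx hd
    rw [slope_def_field, le_div_iff₀ (sub_pos.2 hyx)] at h
    linarith

lemma hasDerivAt_of_supergradient {V L : ℝ → ℝ} {s : Set ℝ} {c : ℝ} (hs : s ∈ 𝓝 c)
    (hL : ContinuousAt L c) (hsup : ∀ x ∈ s, ∀ y ∈ s, V y ≤ V x + L x * (y - x)) :
    HasDerivAt V (L c) c := by
  have hc := mem_of_mem_nhds hs
  have slope_bound : ∀ x ∈ s, x ≠ c → |slope V c x - L c| ≤ |L x - L c| := by
    intro x hx hxc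
    have h₁ := hsup c hc x hx
    have h₂ := hsup x hx c hc
    rw [slope_def_field]
    rcases hxc.lt_or_gt with hlt | hgt
    · have hneg : x - c < 0 := sub_neg.2 hlt
      have hlow : L c ≤ (V x - V c) / (x - c) := by rw [le_div_iff_of_neg hneg]; linarith
      have hupp : (V x - V c) / (x - c) ≤ L x := by rw [div_le_iff_of_neg hneg]; linarith
      exact abs_le_abs (by linarith) (by linarith)
    · have hpos : 0 < x - c := sub_pos.2 hgt
      have hlow : L x ≤ (V x - V c) / (x - c) := by rw [le_div_iff₀ hpos]; linarith
      have hupp : (V x - V c) / (x - c) ≤ L c := by rw [div_le_iff₀ hpos]; linarith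
      exact abs_le_abs_of_nonpos (by linarith) (by linarith)
  rw [hasDerivAt_iff_tendsto_slope, ← tendsto_sub_nhds_zero_iff]
  refine squeeze_zero_norm' (a := fun x => |L x - L c|) ?_ ?_
  · filter_upwards [self_mem_nhdsWithin, mem_nhdsWithin_of_mem_nhds hs] with x hxc hx
    exact slope_bound x hx hxc
  · simpa using ((hL.tendsto.sub_const (L c)).abs).mono_left nhdsWithin_le_nhds

lemma standingAssumptions_of_supergradient {V L : ℝ → ℝ} (hL : IsStrictAntiBijIoi L)
    (hsup : ∀ x ∈ Ioi (0 : ℝ), ∀ y ∈ Ioi (0 : ℝ), V y ≤ V x + L x * (y - x)) : StandingAssumptions V L := by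
  have hderiv : ∀ c, 0 < c → HasDerivAt V (L c) c := fun c hc =>
    hasDerivAt_of_supergradient (Ioi_mem_nhds hc)
      (hL.continuousOn.continuousAt (Ioi_mem_nhds hc)) hsup
  have hcont : ContinuousOn V (Ioi (0 : ℝ)) := fun c hc => (hderiv c hc).continuousAt.continuousWithinAt
  have hderiv_eq : EqOn (deriv V) L (interior (Ioi (0 : ℝ))) := fun c hc => by
    rw [interior_Ioi] at hc
    exact (hderiv c hc).deriv
  refine ⟨strictMonoOn_of_deriv_pos (convex_Ioi 0) hcont fun c hc => ?_,
    StrictAntiOn.strictConcaveOn_of_deriv (convex_Ioi 0) hcont ?_, hderiv, hL.continuousOn,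
    hL.tendsto_atTop, hL.tendsto_nhdsGT_zero⟩
  · rw [hderiv_eq hc]
    exact hL.mapsTo (interior_subset hc)
  · rw [interior_Ioi] at hderiv_eq ⊢
    exact hL.strictAntiOn.congr hderiv_eq.symm

namespace StandingAssumptions

variable {U U' : ℝ → ℝ} (h : StandingAssumptions U U')
include h

lemma strictAntiOn_deriv : StrictAntiOn U' (Ioi (0 : ℝ)) := fun x hx y hy hxy =>
  (h.2.1.lt_slope_of_hasDerivAt hx hy hxy (h.2.2.1 y hy)).trans
    (h.2.1.slope_lt_of_hasDerivAt hx hy hxy (h.2.2.1 x hx))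

lemma isStrictAntiBijIoi_const_mul {w : ℝ} (hw : 0 < w) :
    IsStrictAntiBijIoi (fun x => w * U' x) :=
  .of_tendsto (fun x hx y hy hxy => mul_lt_mul_of_pos_left (h.strictAntiOn_deriv hx hy hxy) hw)
    (continuousOn_const.mul h.2.2.2.1) (by simpa using h.2.2.2.2.1.const_mul w)
    (h.2.2.2.2.2.const_mul_atTop hw)

lemma le_add_deriv_mul_sub (hU0 : ∀ c, 0 < c → U 0 ≤ U c) {x y : ℝ} (hx : 0 < x) (hy : 0 ≤ y) :
    U y ≤ U x + U' x * (y - x) := by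
  have tangent : ∀ t, 0 < t → U t ≤ U x + U' x * (t - x) := fun t ht =>
    h.2.1.concaveOn.le_add_mul_sub_of_hasDerivAt hx ht (h.2.2.1 x hx)
  rcases hy.eq_or_lt with rfl | hy
  · have hlim : Tendsto (fun t => U x + U' x * (t - x)) (𝓝[>] 0) (𝓝 (U x + U' x * (0 - x))) :=
      ((Continuous.tendsto (by fun_prop) 0)).mono_left nhdsWithin_le_nhds
    exact ge_of_tendsto hlim (eventually_nhdsWithin_of_forall fun t ht =>
      (hU0 t ht).trans (tangent t ht))
  · exact tangent y hy

end StandingAssumptions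

section Allocation

variable {ι : Type*} [Fintype ι] {U U' : ι → ℝ → ℝ} {w : ι → ℝ}
  (hU : ∀ i, StandingAssumptions (U i) (U' i)) (hU0 : ∀ i, ∀ c, 0 < c → U i 0 ≤ U i c)
  (hw : ∀ i, 0 ≤ w i)
include hU hU0 hw

lemma sum_mul_le_of_marginal_eq {p q : ι → ℝ} {l : ℝ} (hp : ∀ i, 0 ≤ p i) (hq : ∀ i, 0 < q i)
    (hql : ∀ i, w i * U' i (q i) = l) :
    ∑ i, w i * U i (p i) ≤ ∑ i, w i * U i (q i) + l * (∑ i, p i - ∑ i, q i) :=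
  calc ∑ i, w i * U i (p i) ≤ ∑ i, (w i * U i (q i) + l * (p i - q i)) := by
        refine Finset.sum_le_sum fun i _ => ?_
        rw [← hql i, mul_assoc, ← mul_add]
        exact mul_le_mul_of_nonneg_left ((hU i).le_add_deriv_mul_sub (hU0 i) (hq i) (hp i)) (hw i)
    _ = ∑ i, w i * U i (q i) + l * (∑ i, p i - ∑ i, q i) := by
        rw [Finset.sum_add_distrib, ← Finset.mul_sum, Finset.sum_sub_distrib]

lemma le_add_mul_sub_of_isGreatest {V : ℝ → ℝ}
    (hV : ∀ c : ℝ, 0 < c → IsGreatest {x : ℝ | ∃ p : ι → ℝ, (∀ i, 0 ≤ p i) ∧ (∑ i, p i = c) ∧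
      x = ∑ i, w i * U i (p i)} (V c))
    {c c' l : ℝ} {q : ι → ℝ} (hc : 0 < c) (hc' : 0 < c') (hq : ∀ i, 0 < q i)
    (hql : ∀ i, w i * U' i (q i) = l) (hqc : ∑ i, q i = c) :
    V c' ≤ V c + l * (c' - c) := by
  have hVc : V c = ∑ i, w i * U i (q i) := by
    obtain ⟨⟨p, hp, hpc, hVp⟩, hmax⟩ := hV c hc
    refine le_antisymm ?_ (hmax ⟨q, fun i => (hq i).le, hqc, rfl⟩)
    simpa [hVp, hpc, hqc] using sum_mul_le_of_marginal_eq hU hU0 hw hp hq hql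
  obtain ⟨p, hp, hpc, hVp⟩ := (hV c' hc').1
  simpa [hVc, hVp, hpc, hqc] using sum_mul_le_of_marginal_eq hU hU0 hw hp hq hql

end Allocation

theorem aggregate_utility_satisfies_standing_assumptions_general
    (M : ℕ) (hM : 0 < M) (U U' : Fin M → ℝ → ℝ)
    (hU : ∀ m, StandingAssumptions (U m) (U' m))
    (hU0 : ∀ m, ∀ c : ℝ, 0 < c → U m 0 ≤ U m c)
    (w : Fin M → ℝ) (hw : ∀ m, 0 < w m)
    (V : ℝ → ℝ)
    (hV : ∀ c : ℝ, 0 < c →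
      IsGreatest {x : ℝ | ∃ p : Fin M → ℝ, (∀ m, 0 ≤ p m) ∧ (∑ m, p m = c) ∧
        x = ∑ m, w m * U m (p m)} (V c)) :
    ∃ V' : ℝ → ℝ, StandingAssumptions V V' := by
  have : Nonempty (Fin M) := ⟨⟨0, hM⟩⟩
  have hmarginal m := (hU m).isStrictAntiBijIoi_const_mul (hw m)
  set demand : Fin M → ℝ → ℝ := fun m => Function.invFunOn (fun x => w m * U' m x) (Ioi 0)
  have hdemand : ∀ m, IsStrictAntiBijIoi (demand m) := fun m => (hmarginal m).invFunOn
  have htotal := IsStrictAntiBijIoi.sum hdemand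
  set Λ := Function.invFunOn (fun l => ∑ m, demand m l) (Ioi 0)
  refine ⟨Λ, standingAssumptions_of_supergradient htotal.invFunOn fun c hc c' hc' => ?_⟩
  have hΛ : 0 < Λ c := htotal.invFunOn.mapsTo hc
  exact le_add_mul_sub_of_isGreatest hU hU0 (fun m => (hw m).le) hV hc hc'
    (fun m => (hdemand m).mapsTo hΛ) (fun m => (hmarginal m).apply_invFunOn hΛ)
    (htotal.apply_invFunOn hc)

/-- For each fixed `w` in the interior of the simplex, the aggregate
utility `c ↦ U(w,c)` (the maximal value of `∑ w^m U_m(c^m)` over allocations of `c`)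
is itself strictly increasing, strictly concave, continuously differentiable on
`(0,∞)` and satisfies the Inada conditions; i.e. it satisfies the standing
assumptions for some derivative function. -/
theorem aggregate_utility_satisfies_standing_assumptions
    (M : ℕ) (hM : 0 < M) (U U' : Fin M → ℝ → ℝ)
    (hU : ∀ m, StandingAssumptions (U m) (U' m))
    (hU0 : ∀ m, ∀ c : ℝ, 0 < c → U m 0 ≤ U m c)
    (w : Fin M → ℝ) (hw : ∀ m, 0 < w m) (hw1 : ∑ m, w m = 1)
    (V : ℝ → ℝ)
    (hV : ∀ c : ℝ, 0 < c →
      IsGreatest {x : ℝ | ∃ p : Fin M → ℝ, (∀ m, 0 ≤ p m) ∧ (∑ m, p m = c) ∧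
        x = ∑ m, w m * U m (p m)} (V c)) :
    ∃ V' : ℝ → ℝ, StandingAssumptions V V' :=
  aggregate_utility_satisfies_standing_assumptions_general M hM U U' hU hU0 w hw V hV
end

section
/- Let U_1,...,U_M : (0,∞) → ℝ satisfy the standing assumptions and fix c > 0. If w_1 and w_2 are distinct points of the simplex Σ^M, then the optimal allocations (π^m(w_1,c))_{m=1}^M and (π^m(w_2,c))_{m=1}^M are distinct vectors in c·Σ^M. -/
/-!
Let `p` be optimal for two weight vectors `w` in the simplex. Since `U_m'` blows up at `0`, an
optimal allocation never starves a good with positive weight, so `w` vanishes exactly where `p`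
does. On the support, moving mass between two coordinates is admissible in both directions, so
the first-order condition makes `w m * U_m'(p m)` constant there. Together with `∑ w m = 1`, this
pins `w` down as the normalized vector of the `U_m'(p m)⁻¹`, a function of `p` alone.
-/

open Finset

open Filter Topology

namespace StandingAssumptions

variable {U U' : ℝ → ℝ} {x y : ℝ}

theorem hasDerivAt (h : StandingAssumptions U U') (hx : 0 < x) : HasDerivAt U (U' x) x :=
  h.2.2.1 x hx

theorem sub_lt_deriv_mul (h : StandingAssumptions U U') (hx : 0 < x) (hxy : x < y) :
    U y - U x < U' x * (y - x) := by
  have := h.2.1.slope_lt_of_hasDerivAt hx (hx.trans hxy) hxy (h.hasDerivAt hx)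
  rwa [slope_def_field, div_lt_iff₀ (sub_pos.2 hxy)] at this

theorem deriv_mul_lt_sub (h : StandingAssumptions U U') (hx : 0 < x) (hxy : x < y) :
    U' y * (y - x) < U y - U x := by
  have := h.2.1.lt_slope_of_hasDerivAt hx (hx.trans hxy) hxy (h.hasDerivAt (hx.trans hxy))
  rwa [slope_def_field, lt_div_iff₀ (sub_pos.2 hxy)] at this

theorem strictAntiOn_deriv_s7 (h : StandingAssumptions U U') : StrictAntiOn U' (Set.Ioi 0) :=
  fun _ hx _ _ hxy =>
    have hy := hx.trans hxy
    (h.2.1.lt_slope_of_hasDerivAt hx hy hxy (h.hasDerivAt hy)).trans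
      (h.2.1.slope_lt_of_hasDerivAt hx hy hxy (h.hasDerivAt hx))

theorem deriv_pos (h : StandingAssumptions U U') (hx : 0 < x) : 0 < U' x := by
  have hlim : 0 ≤ U' (x + 1) :=
    le_of_tendsto h.2.2.2.2.1 <| (eventually_ge_atTop (x + 1)).mono fun _ hz =>
      h.strictAntiOn_deriv_s7.antitoneOn (Set.mem_Ioi.2 (by linarith))
        (Set.mem_Ioi.2 (by linarith)) hz
  exact hlim.trans_lt (h.strictAntiOn_deriv_s7 hx (Set.mem_Ioi.2 (by linarith)) (by linarith))

end StandingAssumptions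

theorem Finset.sum_apply_update {ι α β : Type*} [Fintype ι] [DecidableEq ι] [AddCommGroup β]
    (F : ι → α → β) (p : ι → α) (i : ι) (a : α) :
    ∑ j, F j (Function.update p i a j) = ∑ j, F j (p j) + (F i a - F i (p i)) := by
  simp_rw [Function.apply_update F p i a]
  rw [sum_update_of_mem (mem_univ i), sum_eq_add_sum_sdiff_singleton_of_mem (mem_univ i)]
  abel

theorem eq_inv_div_sum_inv_of_mul_eq {ι : Type*} [Fintype ι] {w g : ι → ℝ} {S : Finset ι}
    (hw_sum : ∑ i, w i = 1) (hw_zero : ∀ i ∉ S, w i = 0) (hg : ∀ i ∈ S, g i ≠ 0)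
    (hwg : ∀ i ∈ S, ∀ j ∈ S, w i * g i = w j * g j) {i : ι} (hi : i ∈ S) :
    w i = (g i)⁻¹ / ∑ j ∈ S, (g j)⁻¹ := by
  have hS : ∑ j ∈ S, w j = 1 := by
    rw [← hw_sum]
    exact sum_subset (subset_univ S) fun j _ hj => hw_zero j hj
  have key : w i * ∑ j ∈ S, (g j)⁻¹ = (g i)⁻¹ := by
    calc w i * ∑ j ∈ S, (g j)⁻¹ = ∑ j ∈ S, w j * (g i)⁻¹ := by
          rw [mul_sum]
          refine sum_congr rfl fun j hj => ?_
          field_simp [hg i hi, hg j hj]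
          linarith [hwg i hi j hj]
      _ = (g i)⁻¹ := by rw [← sum_mul, hS, one_mul]
  refine eq_div_of_mul_eq (fun h0 => ?_) key
  rw [h0, mul_zero, eq_comm, inv_eq_zero] at key
  exact hg i hi key

structure IsOptimalAllocation {ι : Type*} [Fintype ι] (U : ι → ℝ → ℝ) (w : ι → ℝ) (c : ℝ)
    (p : ι → ℝ) : Prop where
  nonneg : ∀ m, 0 ≤ p m
  sum_eq : ∑ m, p m = c
  le : ∀ q : ι → ℝ, (∀ m, 0 ≤ q m) → ∑ m, q m = c →
    ∑ m, w m * U m (q m) ≤ ∑ m, w m * U m (p m)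

/-- The weights for which `p` satisfies the first-order conditions. -/
noncomputable def weightsOfAllocation {ι : Type*} [Fintype ι] (U' : ι → ℝ → ℝ) (p : ι → ℝ)
    (m : ι) : ℝ :=
  if 0 < p m then (U' m (p m))⁻¹ / ∑ j with 0 < p j, (U' j (p j))⁻¹ else 0

namespace IsOptimalAllocation

variable {ι : Type*} [Fintype ι] {U : ι → ℝ → ℝ} {w : ι → ℝ} {c : ℝ} {p : ι → ℝ}

theorem transfer_le (hp : IsOptimalAllocation U w c p) {m k : ι} (hmk : m ≠ k) {t : ℝ}
    (hm : 0 ≤ p m + t) (hk : 0 ≤ p k - t) :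
    w m * U m (p m + t) + w k * U k (p k - t) ≤ w m * U m (p m) + w k * U k (p k) := by
  classical
  set q := Function.update (Function.update p m (p m + t)) k (p k - t)
  have hqk : Function.update p m (p m + t) k = p k := Function.update_of_ne hmk.symm _ _
  have hq_nonneg : ∀ j, 0 ≤ q j := by
    intro j
    rcases eq_or_ne j k with rfl | hjk
    · simpa [q] using hk
    rcases eq_or_ne j m with rfl | hjm
    · simpa [q, hjk] using hm
    · simpa [q, hjk, hjm] using hp.nonneg j
  have hq_sum : ∑ j, q j = c := by
    have := sum_apply_update (fun _ x => x) (Function.update p m (p m + t)) k (p k - t)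
    rw [sum_apply_update (fun _ x => x) p m (p m + t), hqk, hp.sum_eq] at this
    rw [this]
    ring
  have := hp.le q hq_nonneg hq_sum
  rw [sum_apply_update (fun j x => w j * U j x), hqk,
    sum_apply_update (fun j x => w j * U j x)] at this
  linarith

theorem mul_deriv_eq (hp : IsOptimalAllocation U w c p) {m k : ι} (hm : 0 < p m)
    (hk : 0 < p k) {a b : ℝ} (ha : HasDerivAt (U m) a (p m)) (hb : HasDerivAt (U k) b (p k)) :
    w m * a = w k * b := by
  obtain rfl | hmk := eq_or_ne m k
  · rw [ha.unique hb]
  set f : ℝ → ℝ := fun t => w m * U m (p m + t) + w k * U k (p k - t)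
  have hf : HasDerivAt f (w m * a + w k * -b) 0 := by
    have ha' := HasDerivAt.comp_const_add (p m) 0 (by rwa [add_zero])
    have hb' := HasDerivAt.comp_const_sub (p k) 0 (by rwa [sub_zero])
    exact (ha'.const_mul (w m)).add (hb'.const_mul (w k))
  have hmax : IsLocalMax f 0 := by
    filter_upwards [Ioo_mem_nhds (neg_lt_zero.2 hm) hk] with t ht
    simpa [f] using hp.transfer_le hmk (t := t) (by linarith [ht.1]) (by linarith [ht.2])
  linarith [hmax.hasDerivAt_eq_zero hf]

theorem weight_eq_zero_of_eq_zero (hp : IsOptimalAllocation U w c p) {U' : ι → ℝ → ℝ}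
    {m k : ι} (hUm : StandingAssumptions (U m) (U' m)) (hUm0 : ∀ x, 0 < x → U m 0 ≤ U m x)
    (hUk : StandingAssumptions (U k) (U' k)) (hwm : 0 ≤ w m) (hwk : 0 ≤ w k)
    (hpm : p m = 0) (hpk : 0 < p k) : w m = 0 := by
  obtain hwm | hwm := hwm.eq_or_lt
  · exact hwm.symm
  exfalso
  have hmk : m ≠ k := by
    rintro rfl
    linarith
  set B := 2 * (w k * U' k (p k / 2))
  -- Moving a small `t` from `k` to `m` gains at least `w m * U_m'(t) * t / 2` and loses at most
  -- `w k * U_k'(p k / 2) * t`, by concavity; the Inada condition at `0` makes the gain win.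
  have hbound : ∀ t ∈ Set.Ioo 0 (p k / 2), w m * U' m t < B := by
    rintro t ⟨ht, htk⟩
    have hmove := hp.transfer_le hmk (t := t) (by linarith) (by linarith)
    rw [hpm, zero_add] at hmove
    have hgain : U' m t * (t / 2) < U m t - U m 0 := by
      have := hUm.deriv_mul_lt_sub (half_pos ht) (half_lt_self ht)
      linarith [hUm0 _ (half_pos ht)]
    have hloss : U k (p k) - U k (p k - t) ≤ U' k (p k / 2) * t := by
      have h₁ := hUk.sub_lt_deriv_mul (x := p k - t) (y := p k) (by linarith) (by linarith)
      have h₂ : U' k (p k - t) ≤ U' k (p k / 2) :=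
        hUk.strictAntiOn_deriv_s7.antitoneOn (half_pos hpk) (Set.mem_Ioi.2 (by linarith))
          (by linarith)
      nlinarith
    nlinarith [mul_lt_mul_of_pos_left hgain hwm, mul_le_mul_of_nonneg_left hloss hwk]
  obtain ⟨t, ht, hBt⟩ := (Eventually.and (Ioo_mem_nhdsGT (half_pos hpk))
    ((hUm.2.2.2.2.2.const_mul_atTop hwm).eventually_gt_atTop B)).exists
  exact ((hbound t ht).trans hBt).false

theorem eq_weightsOfAllocation (hp : IsOptimalAllocation U w c p) {U' : ι → ℝ → ℝ}
    (hU : ∀ m, StandingAssumptions (U m) (U' m)) (hU0 : ∀ m x, 0 < x → U m 0 ≤ U m x)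
    (hw : w ∈ stdSimplex ℝ ι) (hc : 0 < c) : w = weightsOfAllocation U' p := by
  obtain ⟨k, -, hk⟩ : ∃ k ∈ univ, (0 : ℝ) < p k :=
    exists_lt_of_sum_lt (by simpa [hp.sum_eq] using hc)
  have hzero : ∀ m, ¬ 0 < p m → w m = 0 := fun m hm =>
    hp.weight_eq_zero_of_eq_zero (hU m) (hU0 m) (hU k) (hw.1 m) (hw.1 k)
      (le_antisymm (not_lt.1 hm) (hp.nonneg m)) hk
  funext m
  unfold weightsOfAllocation
  split_ifs with hm
  · refine eq_inv_div_sum_inv_of_mul_eq hw.2 (fun i hi => hzero i (by simpa using hi))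
      (fun i hi => ((hU i).deriv_pos (mem_filter.1 hi).2).ne') (fun i hi j hj => ?_)
      (mem_filter.2 ⟨mem_univ m, hm⟩)
    have hi' := (mem_filter.1 hi).2
    have hj' := (mem_filter.1 hj).2
    exact hp.mul_deriv_eq hi' hj' ((hU i).hasDerivAt hi') ((hU j).hasDerivAt hj')
  · exact hzero m hm

end IsOptimalAllocation

theorem optimal_allocation_injective_in_weights_general
    (M : ℕ) (U U' : Fin M → ℝ → ℝ)
    (hU : ∀ m, StandingAssumptions (U m) (U' m))
    (hU0 : ∀ m, ∀ c : ℝ, 0 < c → U m 0 ≤ U m c)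
    (c : ℝ) (hc : 0 < c)
    (w₁ w₂ : Fin M → ℝ)
    (hw₁ : w₁ ∈ stdSimplex ℝ (Fin M)) (hw₂ : w₂ ∈ stdSimplex ℝ (Fin M))
    (hne : w₁ ≠ w₂)
    (p₁ p₂ : Fin M → ℝ)
    (hp₁pos : ∀ m, 0 ≤ p₁ m) (hp₁sum : ∑ m, p₁ m = c)
    (hp₁opt : ∀ q : Fin M → ℝ, (∀ m, 0 ≤ q m) → (∑ m, q m = c) →
      ∑ m, w₁ m * U m (q m) ≤ ∑ m, w₁ m * U m (p₁ m))
    (hp₂pos : ∀ m, 0 ≤ p₂ m) (hp₂sum : ∑ m, p₂ m = c)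
    (hp₂opt : ∀ q : Fin M → ℝ, (∀ m, 0 ≤ q m) → (∑ m, q m = c) →
      ∑ m, w₂ m * U m (q m) ≤ ∑ m, w₂ m * U m (p₂ m)) :
    p₁ ≠ p₂ := by
  rintro rfl
  have h₁ : IsOptimalAllocation U w₁ c p₁ := ⟨hp₁pos, hp₁sum, hp₁opt⟩
  have h₂ : IsOptimalAllocation U w₂ c p₁ := ⟨hp₂pos, hp₂sum, hp₂opt⟩
  exact hne <| (h₁.eq_weightsOfAllocation hU hU0 hw₁ hc).trans
    (h₂.eq_weightsOfAllocation hU hU0 hw₂ hc).symm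

/-- For fixed `c > 0`, if `w₁ ≠ w₂` are distinct points of the simplex
and `p₁, p₂` are the corresponding optimal allocations of `c` (with `pᵢ^m = 0`
whenever `wᵢ^m = 0`), then `p₁ ≠ p₂` (they are distinct vectors in `c·Σ^M`). -/
theorem optimal_allocation_injective_in_weights
    (M : ℕ) (U U' : Fin M → ℝ → ℝ)
    (hU : ∀ m, StandingAssumptions (U m) (U' m))
    (hU0 : ∀ m, ∀ c : ℝ, 0 < c → U m 0 ≤ U m c)
    (c : ℝ) (hc : 0 < c)
    (w₁ w₂ : Fin M → ℝ)
    (hw₁ : w₁ ∈ stdSimplex ℝ (Fin M)) (hw₂ : w₂ ∈ stdSimplex ℝ (Fin M))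
    (hne : w₁ ≠ w₂)
    (p₁ p₂ : Fin M → ℝ)
    (hp₁pos : ∀ m, 0 ≤ p₁ m) (hp₁sum : ∑ m, p₁ m = c)
    (hp₁zero : ∀ m, w₁ m = 0 → p₁ m = 0)
    (hp₁opt : ∀ q : Fin M → ℝ, (∀ m, 0 ≤ q m) → (∑ m, q m = c) →
      ∑ m, w₁ m * U m (q m) ≤ ∑ m, w₁ m * U m (p₁ m))
    (hp₂pos : ∀ m, 0 ≤ p₂ m) (hp₂sum : ∑ m, p₂ m = c)
    (hp₂zero : ∀ m, w₂ m = 0 → p₂ m = 0)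
    (hp₂opt : ∀ q : Fin M → ℝ, (∀ m, 0 ≤ q m) → (∑ m, q m = c) →
      ∑ m, w₂ m * U m (q m) ≤ ∑ m, w₂ m * U m (p₂ m)) :
    p₁ ≠ p₂ :=
  optimal_allocation_injective_in_weights_general M U U' hU hU0 c hc w₁ w₂ hw₁ hw₂ hne p₁ p₂ hp₁pos
    hp₁sum hp₁opt hp₂pos hp₂sum hp₂opt
end

section
/- Let (S,𝒮,μ) be a σ-finite measure space, Λ : S → (0,∞) measurable, and let (U_m)_{m=1}^M be measurable fields of utility functions satisfying the standing assumptions pointwise in s. Suppose (α^m) is an allocation of Λ (measurable nonnegative functions summing to Λ) with E[|U_m(α^m)|] < ∞ for all m, and suppose there exists w ∈ Σ^M with α^m = π^m(w,Λ) for all m. Then (α^m) is Pareto optimal: no allocation (β^m) of Λ satisfies E[U_m(β^m)] ≥ E[U_m(α^m)] for all m with strict inequality for some m. -/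
open Finset MeasureTheory

/-- Extended negative part of an extended real number. -/
noncomputable def enegpart (x : EReal) : ENNReal :=
  if x = ⊥ then ⊤ else ENNReal.ofReal (-(x.toReal))

/-- Extended positive part of an extended real number. -/
noncomputable def epospart (x : EReal) : ENNReal :=
  if x = ⊤ then ⊤ else ENNReal.ofReal (x.toReal)

/-- Expectation with the paper's convention: `E[f] = -∞` whenever the negative
part of `f` fails to be integrable. -/
noncomputable def eE {S : Type*} [MeasurableSpace S] (μ : Measure S)
    (f : S → EReal) : EReal :=
  if (∫⁻ s, enegpart (f s) ∂μ) = ⊤ then ⊥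
  else ((∫⁻ s, epospart (f s) ∂μ : ENNReal) : EReal) -
    ((∫⁻ s, enegpart (f s) ∂μ : ENNReal) : EReal)

/-!
If `β` were a Pareto improvement, then pointwise `∑ w_m U_m(β^m) ≤ ∑ w_m U_m(α^m)`. This upper
bound, together with the integrable negative parts forced by `E[U_m(β^m)] ≥ E[U_m(α^m)] > -∞`,
makes every `w_m U_m(β^m)` integrable, and integrating shows that the two weighted welfares have
the same integral. Hence they agree a.e., and every agent of positive weight is indifferent
between `α^m` and `β^m`. An agent of weight zero receives nothing under `β` a.e.: handing its
share to an agent of positive weight would push the weighted welfare of `β` strictly above the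
maximum attained by `α`. So its utility is that of `α^m = 0`, and nobody gains strictly.
-/

theorem StrictMonoOn.Ici_of_Ioi {α β : Type*} [LinearOrder α] [DenselyOrdered α] [Preorder β]
    {f : α → β} {a : α} (hf : StrictMonoOn f (Set.Ioi a)) (ha : ∀ c, a < c → f a ≤ f c) :
    StrictMonoOn f (Set.Ici a) := by
  intro x hx y _ hxy
  rcases (Set.mem_Ici.1 hx).eq_or_lt with rfl | hax
  · obtain ⟨z, hxz, hzy⟩ := exists_between hxy
    exact (ha z hxz).trans_lt (hf hxz (hxz.trans hzy) hzy)
  · exact hf hax (hax.trans hxy) hxy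

theorem apply_eq_zero_of_weighted_sum_maximizer {ι : Type*} [Fintype ι]
    {w : ι → ℝ} {u : ι → ℝ → ℝ} {x : ι → ℝ} (hx : ∀ k, 0 ≤ x k)
    (hmax : ∀ q : ι → ℝ, (∀ k, 0 ≤ q k) → ∑ k, q k = ∑ k, x k →
      ∑ k, w k * u k (q k) ≤ ∑ k, w k * u k (x k))
    {i j : ι} (hwi : w i = 0) (hwj : 0 < w j) (hu : StrictMonoOn (u j) (Set.Ici 0)) :
    x i = 0 := by
  classical
  by_contra hxi
  replace hxi : 0 < x i := (hx i).lt_of_ne' hxi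
  have hij : i ≠ j := by rintro rfl; exact hwj.ne' hwi
  set q : ι → ℝ := x + Pi.single j (x i) - Pi.single i (x i)
  have hqi : q i = 0 := by simp [q, hij]
  have hqj : q j = x j + x i := by simp [q, hij.symm]
  have hqk : ∀ k, k ≠ i → k ≠ j → q k = x k := fun k hki hkj => by simp [q, hki, hkj]
  have huj : u j (x j) < u j (q j) := by
    rw [hqj]
    exact hu (hx j) (add_nonneg (hx j) hxi.le) (by linarith)
  have hq_nonneg : ∀ k, 0 ≤ q k := by
    intro k
    by_cases hki : k = i
    · rw [hki, hqi]
    by_cases hkj : k = j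
    · rw [hkj, hqj]; linarith [hx j]
    rw [hqk k hki hkj]; exact hx k
  have hq_sum : ∑ k, q k = ∑ k, x k := by simp [q, Finset.sum_add_distrib, Finset.sum_sub_distrib]
  refine (hmax q hq_nonneg hq_sum).not_gt
    (Finset.sum_lt_sum (fun k _ => ?_) ⟨j, Finset.mem_univ j, by gcongr⟩)
  by_cases hki : k = i
  · simp [hki, hwi]
  by_cases hkj : k = j
  · rw [hkj]; gcongr
  rw [hqk k hki hkj]

section Expectation

variable {S : Type*} [MeasurableSpace S] {μ : Measure S}

theorem eE_congr_ae {f g : S → EReal} (h : f =ᵐ[μ] g) : eE μ f = eE μ g := by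
  have hcomp (φ : EReal → ENNReal) : ∫⁻ s, φ (f s) ∂μ = ∫⁻ s, φ (g s) ∂μ :=
    lintegral_congr_ae (h.fun_comp φ)
  rw [eE, eE, hcomp enegpart, hcomp epospart]

theorem eE_coe_eq_integral {f : S → ℝ} (hf : Integrable f μ) :
    eE μ (fun s => (f s : EReal)) = ∫ s, f s ∂μ := by
  have hneg := hf.neg.lintegral_lt_top
  simp only [Pi.neg_apply] at hneg
  simp only [eE, enegpart, epospart, EReal.coe_ne_bot, EReal.coe_ne_top, if_false,
    EReal.toReal_coe]
  rw [if_neg hneg.ne, integral_eq_lintegral_pos_part_sub_lintegral_neg_part hf, EReal.coe_sub,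
    EReal.coe_ennreal_toReal hf.lintegral_lt_top.ne, EReal.coe_ennreal_toReal hneg.ne]

theorem integrable_negPart_of_eE_ne_bot {f : S → ℝ} (hf : AEStronglyMeasurable f μ)
    (h : eE μ (fun s => (f s : EReal)) ≠ ⊥) : Integrable (fun s => (f s)⁻) μ := by
  refine (lintegral_ofReal_ne_top_iff_integrable hf.negPart
    (Filter.Eventually.of_forall fun s => negPart_nonneg (f s))).1 fun htop => h ?_
  simp_all [eE, enegpart, negPart_def]

theorem integrable_of_sum_le {ι : Type*} {s : Finset ι} {f h : ι → S → ℝ} {g : S → ℝ}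
    (hfm : ∀ i ∈ s, AEStronglyMeasurable (f i) μ) (hh : ∀ i ∈ s, Integrable (h i) μ)
    (hhf : ∀ i ∈ s, h i ≤ᵐ[μ] f i) (hg : Integrable g μ)
    (hfg : (fun x => ∑ i ∈ s, f i x) ≤ᵐ[μ] g) {i : ι} (hi : i ∈ s) : Integrable (f i) μ := by
  classical
  refine integrable_of_le_of_le (hfm i hi) (hhf i hi) ?_ (hh i hi)
    (hg.sub (integrable_finsetSum (s.erase i) fun k hk => hh k (Finset.mem_of_mem_erase hk)))
  filter_upwards [(Filter.eventually_all_finset s).2 hhf, hfg] with x hhfx hfgx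
  have hrest : ∑ k ∈ s.erase i, h k x ≤ ∑ k ∈ s.erase i, f k x :=
    Finset.sum_le_sum fun k hk => hhfx k (Finset.mem_of_mem_erase hk)
  have hsplit := Finset.add_sum_erase s (fun k => f k x) hi
  simp only [Pi.sub_apply] at hfgx ⊢
  linarith

theorem mul_le_mul_integral_of_coe_le_eE {c a : ℝ} (hc : 0 ≤ c) {g : S → ℝ}
    (hcg : Integrable (fun s => c * g s) μ) (h : (a : EReal) ≤ eE μ (fun s => (g s : EReal))) :
    c * a ≤ c * ∫ s, g s ∂μ := by
  rcases hc.eq_or_lt with rfl | hc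
  · simp
  rw [eE_coe_eq_integral ((integrable_const_mul_iff hc.ne'.isUnit g).1 hcg)] at h
  exact mul_le_mul_of_nonneg_left (EReal.coe_le_coe_iff.1 h) hc.le

section Welfare

variable {ι : Type*} [Fintype ι] {w : ι → ℝ} {f g : ι → S → ℝ}

theorem integrable_mul_of_sum_mul_le (hw : ∀ i, 0 ≤ w i) (hf : ∀ i, Integrable (f i) μ)
    (hg : ∀ i, AEStronglyMeasurable (g i) μ)
    (hfg : ∀ i, ((∫ s, f i s ∂μ : ℝ) : EReal) ≤ eE μ (fun s => (g i s : EReal)))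
    (hle : ∀ᵐ s ∂μ, ∑ i, w i * g i s ≤ ∑ i, w i * f i s) (i : ι) :
    Integrable (fun s => w i * g i s) μ := by
  refine integrable_of_sum_le (h := fun i s => -(w i * (g i s)⁻)) (fun i _ => (hg i).const_mul _)
    (fun i _ => ?_) (fun i _ => Filter.Eventually.of_forall fun s => ?_)
    (integrable_finsetSum _ fun i _ => (hf i).const_mul (w i)) hle (Finset.mem_univ i)
  · exact ((integrable_negPart_of_eE_ne_bot (hg i)
      (ne_bot_of_le_ne_bot (EReal.coe_ne_bot _) (hfg i))).const_mul _).neg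
  · simp only [← mul_neg]
    exact mul_le_mul_of_nonneg_left (neg_le.1 (neg_le_negPart _)) (hw i)

theorem integral_sum_mul (hwf : ∀ i, Integrable (fun s => w i * f i s) μ) :
    ∫ s, ∑ i, w i * f i s ∂μ = ∑ i, w i * ∫ s, f i s ∂μ := by
  simp only [integral_finsetSum _ fun i _ => hwf i, integral_const_mul]

theorem sum_mul_integral_eq_of_le_eE (hw : ∀ i, 0 ≤ w i) (hf : ∀ i, Integrable (f i) μ)
    (hg : ∀ i, AEStronglyMeasurable (g i) μ)
    (hfg : ∀ i, ((∫ s, f i s ∂μ : ℝ) : EReal) ≤ eE μ (fun s => (g i s : EReal)))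
    (hle : ∀ᵐ s ∂μ, ∑ i, w i * g i s ≤ ∑ i, w i * f i s) :
    ∑ i, w i * ∫ s, g i s ∂μ = ∑ i, w i * ∫ s, f i s ∂μ := by
  have hwg := integrable_mul_of_sum_mul_le hw hf hg hfg hle
  have hwf i : Integrable (fun s => w i * f i s) μ := (hf i).const_mul _
  refine le_antisymm ?_ (Finset.sum_le_sum fun i _ =>
    mul_le_mul_integral_of_coe_le_eE (hw i) (hwg i) (hfg i))
  rw [← integral_sum_mul hwg, ← integral_sum_mul hwf]
  exact integral_mono_ae (integrable_finsetSum _ fun i _ => hwg i)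
    (integrable_finsetSum _ fun i _ => hwf i) hle

theorem sum_mul_ae_eq_of_le_eE (hw : ∀ i, 0 ≤ w i) (hf : ∀ i, Integrable (f i) μ)
    (hg : ∀ i, AEStronglyMeasurable (g i) μ)
    (hfg : ∀ i, ((∫ s, f i s ∂μ : ℝ) : EReal) ≤ eE μ (fun s => (g i s : EReal)))
    (hle : ∀ᵐ s ∂μ, ∑ i, w i * g i s ≤ ∑ i, w i * f i s) :
    (fun s => ∑ i, w i * g i s) =ᵐ[μ] fun s => ∑ i, w i * f i s := by
  have hwg := integrable_mul_of_sum_mul_le hw hf hg hfg hle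
  have hwf i : Integrable (fun s => w i * f i s) μ := (hf i).const_mul _
  refine (integral_eq_iff_of_ae_le (integrable_finsetSum _ fun i _ => hwg i)
    (integrable_finsetSum _ fun i _ => hwf i) hle).1 ?_
  rw [integral_sum_mul hwg, integral_sum_mul hwf, sum_mul_integral_eq_of_le_eE hw hf hg hfg hle]

theorem eE_eq_integral_of_le_eE (hw : ∀ i, 0 ≤ w i) (hf : ∀ i, Integrable (f i) μ)
    (hg : ∀ i, AEStronglyMeasurable (g i) μ)
    (hfg : ∀ i, ((∫ s, f i s ∂μ : ℝ) : EReal) ≤ eE μ (fun s => (g i s : EReal)))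
    (hle : ∀ᵐ s ∂μ, ∑ i, w i * g i s ≤ ∑ i, w i * f i s) {i : ι} (hi : w i ≠ 0) :
    eE μ (fun s => (g i s : EReal)) = ∫ s, f i s ∂μ := by
  have hwg := integrable_mul_of_sum_mul_le hw hf hg hfg hle
  have hmul := (Finset.sum_eq_sum_iff_of_le fun i _ =>
    mul_le_mul_integral_of_coe_le_eE (hw i) (hwg i) (hfg i)).1
    (sum_mul_integral_eq_of_le_eE hw hf hg hfg hle).symm i (Finset.mem_univ i)
  rw [eE_coe_eq_integral ((integrable_const_mul_iff hi.isUnit _).1 (hwg i)),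
    mul_left_cancel₀ hi hmul]

end Welfare

end Expectation

theorem pareto_optimal_of_pointwise_maximizer_general
    {S : Type*} [MeasurableSpace S] (μ : Measure S)
    (M : ℕ) (Λ : S → ℝ)
    (U U' : Fin M → S → ℝ → ℝ)
    (hUmeas : ∀ m, Measurable (fun p : S × ℝ => U m p.1 p.2))
    (hU : ∀ m, ∀ s, StandingAssumptions (U m s) (U' m s))
    (hU0 : ∀ m, ∀ s, ∀ c : ℝ, 0 < c → U m s 0 ≤ U m s c)
    (α : Fin M → S → ℝ)
    (hαint : ∀ m, Integrable (fun s => U m s (α m s)) μ)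
    (w : Fin M → ℝ) (hw : w ∈ stdSimplex ℝ (Fin M))
    (hαzero : ∀ m, w m = 0 → ∀ s, α m s = 0)
    (hαopt : ∀ s, ∀ q : Fin M → ℝ, (∀ m, 0 ≤ q m) → (∑ m, q m = Λ s) →
      ∑ m, w m * U m s (q m) ≤ ∑ m, w m * U m s (α m s)) :
    ¬ ∃ β : Fin M → S → ℝ, (∀ m, Measurable (β m)) ∧
      (∀ m, ∀ s, 0 ≤ β m s) ∧ (∀ s, ∑ m, β m s = Λ s) ∧
      (∀ m, ((∫ s, U m s (α m s) ∂μ : ℝ) : EReal) ≤ eE μ (fun s => (U m s (β m s) : EReal))) ∧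
      (∃ l, ((∫ s, U l s (α l s) ∂μ : ℝ) : EReal) < eE μ (fun s => (U l s (β l s) : EReal))) := by
  rintro ⟨β, hβm, hβpos, hβsum, hβge, l, hβl⟩
  have hUβ m : AEStronglyMeasurable (fun s => U m s (β m s)) μ :=
    ((hUmeas m).comp (measurable_id.prodMk (hβm m))).aestronglyMeasurable
  have hle : ∀ᵐ s ∂μ, ∑ m, w m * U m s (β m s) ≤ ∑ m, w m * U m s (α m s) :=
    Filter.Eventually.of_forall fun s => hαopt s _ (hβpos · s) (hβsum s)
  rcases eq_or_ne (w l) 0 with hwl | hwl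
  · obtain ⟨j, hj⟩ : ∃ j, 0 < w j := by
      by_contra! h
      have := hw.2
      simp [le_antisymm (h _) (hw.1 _)] at this
    have hβl_zero : β l =ᵐ[μ] 0 := by
      filter_upwards [sum_mul_ae_eq_of_le_eE hw.1 hαint hUβ hβge hle] with s hs
      exact apply_eq_zero_of_weighted_sum_maximizer (u := fun m => U m s) (hβpos · s)
        (fun q hq hqs => hs ▸ hαopt s q hq (hqs.trans (hβsum s))) hwl hj
        ((hU j s).1.Ici_of_Ioi (hU0 j s))
    refine hβl.ne ?_
    rw [← eE_coe_eq_integral (hαint l)]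
    exact eE_congr_ae (hβl_zero.mono fun s hs => by simp [hs, hαzero l hwl s])
  · exact hβl.ne (eE_eq_integral_of_le_eE hw.1 hαint hUβ hβge hle hwl).symm

/-- An allocation of `Λ` that is, for some simplex weight `w`, the
pointwise maximizer of the weighted aggregate utility, and has integrable utilities,
is Pareto optimal. -/
theorem pareto_optimal_of_pointwise_maximizer
    {S : Type*} [MeasurableSpace S] (μ : Measure S) [SigmaFinite μ]
    (M : ℕ) (Λ : S → ℝ) (hΛm : Measurable Λ) (hΛpos : ∀ s, 0 < Λ s)
    (U U' : Fin M → S → ℝ → ℝ)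
    (hUmeas : ∀ m, Measurable (fun p : S × ℝ => U m p.1 p.2))
    (hU : ∀ m, ∀ s, StandingAssumptions (U m s) (U' m s))
    (hU0 : ∀ m, ∀ s, ∀ c : ℝ, 0 < c → U m s 0 ≤ U m s c)
    (α : Fin M → S → ℝ) (hαm : ∀ m, Measurable (α m))
    (hαpos : ∀ m, ∀ s, 0 ≤ α m s) (hαsum : ∀ s, ∑ m, α m s = Λ s)
    (hαint : ∀ m, Integrable (fun s => U m s (α m s)) μ)
    (w : Fin M → ℝ) (hw : w ∈ stdSimplex ℝ (Fin M))
    (hαzero : ∀ m, w m = 0 → ∀ s, α m s = 0)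
    (hαopt : ∀ s, ∀ q : Fin M → ℝ, (∀ m, 0 ≤ q m) → (∑ m, q m = Λ s) →
      ∑ m, w m * U m s (q m) ≤ ∑ m, w m * U m s (α m s)) :
    ¬ ∃ β : Fin M → S → ℝ, (∀ m, Measurable (β m)) ∧
      (∀ m, ∀ s, 0 ≤ β m s) ∧ (∀ s, ∑ m, β m s = Λ s) ∧
      (∀ m, ((∫ s, U m s (α m s) ∂μ : ℝ) : EReal) ≤ eE μ (fun s => (U m s (β m s) : EReal))) ∧
      (∃ l, ((∫ s, U l s (α l s) ∂μ : ℝ) : EReal) < eE μ (fun s => (U l s (β l s) : EReal))) :=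
  pareto_optimal_of_pointwise_maximizer_general μ M Λ U U' hUmeas hU hU0 α hαint w hw hαzero hαopt
end

section
/- Let (S,𝒮,μ) be a σ-finite measure space, Λ : S → (0,∞) measurable, and (U_m)_{m=1}^M measurable fields of utilities satisfying the standing assumptions. If (α^m) is a Pareto optimal allocation of Λ (so in particular E[|U_m(α^m)|] < ∞ for all m), then there exists w ∈ Σ^M such that α^m = π^m(w,Λ) μ-a.e. for every m = 1,...,M. -/
/-!
The vector `x = (E[U_m(α^m)])_m` is a maximal point of the set of utility vectors dominated by
feasible allocations. Concavity of the utilities makes that set convex, so a supporting hyperplane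
at `x` gives weights `w` in the simplex for which `α` maximizes the integrated welfare
`∑ w_m E[U_m(β^m)]` among all allocations `β`. Replacing `α` by a competitor on a set of finite
positive measure shows that `α` then maximizes the welfare `∑ w_m U_m(s, ·)` pointwise almost
everywhere: first against the countably many competitors `Λ p`, `p` in a dense subset of the open
simplex, then, by continuity and concavity, against all of them. Agents of weight zero receive
nothing because the utilities are strictly increasing.
-/

open Finset MeasureTheory

open Set Filter Topology

theorem concaveOn_Ici_of_concaveOn_Ioi {f : ℝ → ℝ} {a : ℝ} (hf : ConcaveOn ℝ (Ioi a) f)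
    (hc : ContinuousOn f (Ioi a)) (ha : ∀ x, a < x → f a ≤ f x) : ConcaveOn ℝ (Ici a) f := by
  have endpoint : ∀ y, a < y → ∀ b c : ℝ, 0 < b → 0 < c → b + c = 1 →
      b * f a + c * f y ≤ f (b * a + c * y) := by
    intro y hy b c hb hc' hbc
    have hmid : a < b * a + c * y := by
      linear_combination mul_pos hc' (sub_pos.2 hy) - a * hbc
    have hlim : Tendsto (fun x => f (b * x + c * y)) (𝓝[>] a) (𝓝 (f (b * a + c * y))) :=
      ((hc.continuousAt (Ioi_mem_nhds hmid)).tendsto.comp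
        (Continuous.tendsto (by fun_prop) a)).mono_left nhdsWithin_le_nhds
    refine ge_of_tendsto hlim ?_
    filter_upwards [self_mem_nhdsWithin] with x hx
    calc b * f a + c * f y ≤ b * f x + c * f y := by gcongr; exact ha x hx
      _ ≤ f (b * x + c * y) := hf.2 hx hy hb.le hc'.le hbc
  refine concaveOn_iff_forall_pos.2 ⟨convex_Ici a, fun x hx y hy b c hb hc' hbc => ?_⟩
  simp only [smul_eq_mul]
  rcases (mem_Ici.1 hx).eq_or_lt with rfl | hx <;> rcases (mem_Ici.1 hy).eq_or_lt with rfl | hy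
  · rw [← add_mul, ← add_mul, hbc, one_mul, one_mul]
  · exact endpoint y hy b c hb hc' hbc
  · simpa only [add_comm] using endpoint x hx c b hc' hb (by linarith)
  · exact hf.2 hx hy hb.le hc'.le hbc

namespace StandingAssumptions

variable {U U' : ℝ → ℝ}

theorem continuousOn (h : StandingAssumptions U U') : ContinuousOn U (Ioi 0) :=
  fun x hx => (h.2.2.1 x hx).continuousAt.continuousWithinAt

theorem concaveOn_Ici (h : StandingAssumptions U U') (h0 : ∀ c, 0 < c → U 0 ≤ U c) :
    ConcaveOn ℝ (Ici 0) U :=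
  concaveOn_Ici_of_concaveOn_Ioi h.2.1.concaveOn h.continuousOn h0

theorem strictMonoOn_Ici (h : StandingAssumptions U U') (h0 : ∀ c, 0 < c → U 0 ≤ U c) :
    StrictMonoOn U (Ici 0) := by
  intro x hx y hy hxy
  rcases (mem_Ici.1 hx).eq_or_lt with rfl | hx
  · have hy : (0 : ℝ) < y := hxy
    exact (h0 _ (half_pos hy)).trans_lt (h.1 (half_pos hy) hy (half_lt_self hy))
  · exact h.1 hx (hx.trans hxy) hxy

end StandingAssumptions

theorem coe_integral_le_eE {S : Type*} [MeasurableSpace S] {μ : Measure S} {f g : S → ℝ}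
    (hg : Integrable g μ) (hgf : g ≤ f) :
    ((∫ s, g s ∂μ : ℝ) : EReal) ≤ eE μ (fun s => (f s : EReal)) := by
  have hneg : ∫⁻ s, ENNReal.ofReal (-f s) ∂μ ≤ ∫⁻ s, ENNReal.ofReal (-g s) ∂μ :=
    lintegral_mono fun s => ENNReal.ofReal_le_ofReal (neg_le_neg (hgf s))
  have hpos : ∫⁻ s, ENNReal.ofReal (g s) ∂μ ≤ ∫⁻ s, ENNReal.ofReal (f s) ∂μ :=
    lintegral_mono fun s => ENNReal.ofReal_le_ofReal (hgf s)
  have hg_neg : ∫⁻ s, ENNReal.ofReal (-g s) ∂μ ≠ ⊤ := hg.neg.lintegral_lt_top.ne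
  have hg_pos : ∫⁻ s, ENNReal.ofReal (g s) ∂μ ≠ ⊤ := hg.lintegral_lt_top.ne
  simp only [eE, enegpart, epospart, EReal.coe_ne_bot, EReal.coe_ne_top, if_false,
    EReal.toReal_coe, if_neg (ne_top_of_le_ne_top hg_neg hneg)]
  rw [integral_eq_lintegral_pos_part_sub_lintegral_neg_part hg, EReal.coe_sub,
    EReal.coe_ennreal_toReal hg_pos, EReal.coe_ennreal_toReal hg_neg]
  exact EReal.sub_le_sub (by exact_mod_cast hpos) (by exact_mod_cast hneg)

section

variable {ι : Type*} [Fintype ι]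

theorem exists_mem_stdSimplex_sum_mul_le_of_not_lt {C : Set (ι → ℝ)} (hC : Convex ℝ C)
    (hne : C.Nonempty) {x : ι → ℝ} (hx : ∀ z ∈ C, ¬ ∀ i, x i < z i) :
    ∃ w ∈ stdSimplex ℝ ι, ∀ z ∈ C, ∑ i, w i * z i ≤ ∑ i, w i * x i := by
  classical
  set O : Set (ι → ℝ) := univ.pi fun i => Ioi (x i)
  have hdisj : Disjoint O C :=
    Set.disjoint_left.2 fun z hzO hzC => hx z hzC fun i => hzO i (mem_univ i)
  obtain ⟨f, u, hfO, hfC⟩ := geometric_hahn_banach_open (convex_pi fun i _ => convex_Ioi _)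
    (isOpen_set_pi Set.finite_univ fun i _ => isOpen_Ioi) hC hdisj
  set v : ι → ℝ := fun i => f fun j => if i = j then 1 else 0
  have hf : ∀ y, f y = ∑ i, y i * v i := fun y => by
    simpa [smul_eq_mul] using LinearMap.pi_apply_eq_sum_univ (f : (ι → ℝ) →ₗ[ℝ] ℝ) y
  have hv : ∀ i, v i ≤ 0 := by
    intro i
    by_contra! hvi
    set t := (u - f (x + 1)) / v i
    have ht : 0 ≤ t := div_nonneg (sub_pos.2 (hfO (x + 1) fun j _ => by simp)).le hvi.le
    have hmem : x + 1 + t • (fun j => if i = j then 1 else 0) ∈ O := fun j _ => by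
      have : (0 : ℝ) ≤ t * if i = j then 1 else 0 := mul_nonneg ht (by split_ifs <;> norm_num)
      simp only [Set.mem_Ioi, Pi.add_apply, Pi.one_apply, Pi.smul_apply, smul_eq_mul]
      linarith
    have := hfO _ hmem
    rw [map_add, map_smul, smul_eq_mul, div_mul_cancel₀ _ hvi.ne'] at this
    linarith
  have hxz : ∀ z ∈ C, f x ≤ f z := by
    intro z hz
    have hxO : x ∈ closure O := by
      rw [closure_pi_set]
      exact fun i _ => by simp
    exact (f.continuous.continuousWithinAt.closure_le hxO continuousWithinAt_const
      fun y hy => (hfO y hy).le).trans (hfC z hz)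
  have hS : ∑ i, v i < 0 := by
    refine (sum_nonpos fun i _ => hv i).lt_of_ne fun hS => ?_
    have hv0 : ∀ i, v i = 0 := fun i =>
      (sum_eq_zero_iff_of_nonpos fun i _ => hv i).1 hS i (mem_univ i)
    obtain ⟨z, hz⟩ := hne
    have h1 := hfO (x + 1) fun j _ => by simp
    have h2 := hfC z hz
    simp only [hf, hv0, mul_zero, sum_const_zero] at h1 h2
    linarith
  refine ⟨fun i => v i / ∑ j, v j, ⟨fun i => div_nonneg_of_nonpos (hv i) hS.le, ?_⟩, fun z hz => ?_⟩
  · rw [← sum_div, div_self hS.ne]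
  · have hw : ∀ y : ι → ℝ, ∑ i, v i / (∑ j, v j) * y i = f y / ∑ j, v j := fun y => by
      rw [hf, sum_div]; exact sum_congr rfl fun i _ => by ring
    rw [hw, hw]
    exact div_le_div_of_nonpos_of_le hS.le (hxz z hz)

theorem ConcaveOn.le_of_forall_mem_openSegment_le {E : Type*} [AddCommGroup E] [Module ℝ E]
    {K : Set E} {G : E → ℝ} (hG : ConcaveOn ℝ K G) {q c : E} (hq : q ∈ K) (hc : c ∈ K) {r : ℝ}
    (h : ∀ y ∈ openSegment ℝ q c, G y ≤ r) : G q ≤ r := by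
  have hseg : ∀ b ∈ Ioo (0 : ℝ) 1, (1 - b) * G q + b * G c ≤ r := fun b hb =>
    (hG.2 hq hc (by linarith [hb.2]) hb.1.le (by ring)).trans
      (h _ ⟨1 - b, b, by linarith [hb.2], hb.1, by ring, rfl⟩)
  have hlim : Tendsto (fun b : ℝ => (1 - b) * G q + b * G c) (𝓝[>] 0) (𝓝 (G q)) := by
    have := ((Continuous.tendsto (by fun_prop) 0).mono_left nhdsWithin_le_nhds :
      Tendsto (fun b : ℝ => (1 - b) * G q + b * G c) (𝓝[>] 0) _)
    simpa using this
  exact le_of_tendsto hlim (eventually_of_mem (Ioo_mem_nhdsGT one_pos) hseg)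

theorem concaveOn_sum_mul_apply {V : ι → ℝ → ℝ} (hV : ∀ i, ConcaveOn ℝ (Ici 0) (V i))
    {w : ι → ℝ} (hw : ∀ i, 0 ≤ w i) :
    ConcaveOn ℝ (univ.pi fun _ => Ici 0) fun q => ∑ i, w i * V i (q i) := by
  refine ⟨convex_pi fun _ _ => convex_Ici 0, fun x hx y hy a b ha hb hab => ?_⟩
  simp only [smul_eq_mul, mul_sum, ← sum_add_distrib]
  refine sum_le_sum fun i _ => ?_
  have := mul_le_mul_of_nonneg_left ((hV i).2 (hx i (mem_univ i)) (hy i (mem_univ i)) ha hb hab)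
    (hw i)
  simp only [smul_eq_mul, Pi.add_apply, Pi.smul_apply] at this ⊢
  linarith

def positiveStdSimplex (ι : Type*) [Fintype ι] : Set (ι → ℝ) :=
  {p | (∀ i, 0 < p i) ∧ ∑ i, p i = 1}

theorem sum_mul_le_of_forall_mem_dense_le [Nonempty ι] {V : ι → ℝ → ℝ}
    (hcont : ∀ i, ContinuousOn (V i) (Ioi 0)) (hconc : ∀ i, ConcaveOn ℝ (Ici 0) (V i))
    {w : ι → ℝ} (hw : ∀ i, 0 ≤ w i) {L r : ℝ} (hL : 0 < L) {t : Set (ι → ℝ)}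
    (ht : positiveStdSimplex ι ⊆ closure t) (h : ∀ p ∈ t, ∑ i, w i * V i (L * p i) ≤ r)
    {q : ι → ℝ} (hq : ∀ i, 0 ≤ q i) (hqL : ∑ i, q i = L) : ∑ i, w i * V i (q i) ≤ r := by
  have hpos : ∀ y : ι → ℝ, (∀ i, 0 < y i) → ∑ i, y i = L → ∑ i, w i * V i (y i) ≤ r := by
    intro y hy hyL
    have hp : L⁻¹ • y ∈ positiveStdSimplex ι :=
      ⟨fun i => mul_pos (inv_pos.2 hL) (hy i), by simp [← mul_sum, hyL, hL.ne']⟩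
    have hcontp : ContinuousAt (fun p : ι → ℝ => ∑ i, w i * V i (L * p i)) (L⁻¹ • y) := by
      refine tendsto_finsetSum _ fun i _ => ((ContinuousAt.comp ?_ ?_).const_mul (w i))
      · simpa [hL.ne'] using (hcont i).continuousAt (Ioi_mem_nhds (hy i))
      · exact (continuous_const.mul (continuous_apply i)).continuousAt
    simpa [hL.ne'] using hcontp.continuousWithinAt.closure_le (ht hp) continuousWithinAt_const h
  have hc : (fun _ => L / Fintype.card ι) ∈ univ.pi fun _ : ι => Ici (0 : ℝ) :=
    fun i _ => mem_Ici.2 (by positivity)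
  refine (concaveOn_sum_mul_apply hconc hw).le_of_forall_mem_openSegment_le
    (fun i _ => mem_Ici.2 (hq i)) hc ?_
  rintro _ ⟨a, b, ha, hb, hab, rfl⟩
  refine hpos _ (fun i => ?_) ?_
  · simp only [Pi.add_apply, Pi.smul_apply, smul_eq_mul]
    have := hq i
    positivity
  · simp only [Pi.add_apply, Pi.smul_apply, smul_eq_mul, sum_add_distrib, ← mul_sum, hqL,
      sum_const, card_univ, nsmul_eq_mul]
    rw [mul_div_cancel₀ _ (Nat.cast_ne_zero.2 Fintype.card_ne_zero)]
    linear_combination L * hab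

theorem eq_zero_of_weight_eq_zero_of_forall_sum_mul_le {V : ι → ℝ → ℝ}
    (hV : ∀ i, StrictMonoOn (V i) (Ici 0)) {w : ι → ℝ} (hw : w ∈ stdSimplex ℝ ι) {a : ι → ℝ}
    (ha : ∀ i, 0 ≤ a i)
    (hmax : ∀ q : ι → ℝ, (∀ i, 0 ≤ q i) → ∑ i, q i = ∑ i, a i →
      ∑ i, w i * V i (q i) ≤ ∑ i, w i * V i (a i))
    {m : ι} (hm : w m = 0) : a m = 0 := by
  classical
  obtain ⟨l, hl⟩ : ∃ l, 0 < w l := by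
    by_contra! h
    linarith [sum_nonpos (s := univ) fun i _ => h i, hw.2]
  have hlm : l ≠ m := by rintro rfl; exact hl.ne' hm
  by_contra ham
  -- move the whole share of `m`, whose weight is zero, to `l`
  set q : ι → ℝ := a + a m • (Pi.single l 1 - Pi.single m 1)
  have hq : ∀ i, q i = if i = l then a l + a m else if i = m then 0 else a i := fun i => by
    rcases eq_or_ne i l with rfl | hil
    · simp [q, hlm]
    rcases eq_or_ne i m with rfl | him <;> simp [q, *]
  have hgain : V l (a l) < V l (q l) := by
    rw [hq, if_pos rfl]
    exact hV l (ha l) (add_nonneg (ha l) (ha m)) (lt_add_of_pos_right _ ((ha m).lt_of_ne' ham))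
  refine (hmax q (fun i => ?_) ?_).not_gt (sum_lt_sum (fun i _ => ?_)
    ⟨l, mem_univ l, mul_lt_mul_of_pos_left hgain hl⟩)
  · rw [hq]; split_ifs <;> linarith [ha i, ha l, ha m]
  · simp [q, sum_add_distrib, ← mul_sum, sum_sub_distrib]
  · rcases eq_or_ne i l with rfl | hil
    · exact mul_le_mul_of_nonneg_left hgain.le hl.le
    rcases eq_or_ne i m with rfl | him
    · simp [hm]
    · rw [hq, if_neg hil, if_neg him]

end

section

variable {ι S : Type*} [Fintype ι] [MeasurableSpace S]

structure IsAllocation (Λ : S → ℝ) (β : ι → S → ℝ) : Prop where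
  measurable : ∀ i, Measurable (β i)
  nonneg : ∀ i s, 0 ≤ β i s
  sum_eq : ∀ s, ∑ i, β i s = Λ s

namespace IsAllocation

variable {Λ : S → ℝ} {β γ : ι → S → ℝ}

theorem convexComb (hβ : IsAllocation Λ β) (hγ : IsAllocation Λ γ) {a b : ℝ} (ha : 0 ≤ a)
    (hb : 0 ≤ b) (hab : a + b = 1) : IsAllocation Λ (a • β + b • γ) where
  measurable i := ((hβ.measurable i).const_smul a).add ((hγ.measurable i).const_smul b)
  nonneg i s := by
    simp only [Pi.add_apply, Pi.smul_apply, smul_eq_mul]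
    exact add_nonneg (mul_nonneg ha (hβ.nonneg i s)) (mul_nonneg hb (hγ.nonneg i s))
  sum_eq s := by
    simp only [Pi.add_apply, Pi.smul_apply, smul_eq_mul, sum_add_distrib, ← mul_sum,
      hβ.sum_eq, hγ.sum_eq, ← add_mul, hab, one_mul]

theorem piecewise (hβ : IsAllocation Λ β) (hγ : IsAllocation Λ γ) {E : Set S}
    [DecidablePred (· ∈ E)] (hE : MeasurableSet E) :
    IsAllocation Λ (fun i => E.piecewise (β i) (γ i)) where
  measurable i := (hβ.measurable i).piecewise hE (hγ.measurable i)
  nonneg i s := by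
    by_cases hs : s ∈ E <;> simp [hs, hβ.nonneg, hγ.nonneg]
  sum_eq s := by
    by_cases hs : s ∈ E <;> simp [hs, hβ.sum_eq, hγ.sum_eq]

theorem mul_of_mem_stdSimplex (hΛ : Measurable Λ) (hΛ0 : ∀ s, 0 ≤ Λ s)
    {p : ι → ℝ} (hp : p ∈ stdSimplex ℝ ι) : IsAllocation Λ fun i s => Λ s * p i where
  measurable i := hΛ.mul_const (p i)
  nonneg i s := mul_nonneg (hΛ0 s) (hp.1 i)
  sum_eq s := by rw [← mul_sum, hp.2, mul_one]

end IsAllocation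

/-- Integrable minorants `g i ≤ U i (β i)` stand in for the expectations `E[U_i(β^i)]`: they keep
the set convex without any integrability assumption on the utilities of `β`. -/
def utilityPossibilitySet (μ : Measure S) (U : ι → S → ℝ → ℝ) (Λ : S → ℝ) :
    Set (ι → ℝ) :=
  {z | ∃ β g : ι → S → ℝ, IsAllocation Λ β ∧ (∀ i, Integrable (g i) μ) ∧
    (∀ i s, g i s ≤ U i s (β i s)) ∧ ∀ i, z i ≤ ∫ s, g i s ∂μ}

theorem convex_utilityPossibilitySet {μ : Measure S} {U : ι → S → ℝ → ℝ} {Λ : S → ℝ}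
    (hU : ∀ i s, ConcaveOn ℝ (Ici 0) (U i s)) :
    Convex ℝ (utilityPossibilitySet μ U Λ) := by
  rintro _ ⟨β, g, hβ, hg, hgU, hz⟩ _ ⟨γ, h, hγ, hh, hhU, hz'⟩ a b ha hb hab
  refine ⟨a • β + b • γ, a • g + b • h, hβ.convexComb hγ ha hb hab,
    fun i => ((hg i).smul a).add ((hh i).smul b), fun i s => ?_, fun i => ?_⟩
  · calc (a • g + b • h) i s = a * g i s + b * h i s := rfl
      _ ≤ a * U i s (β i s) + b * U i s (γ i s) := by gcongr <;> [exact hgU i s; exact hhU i s]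
      _ ≤ U i s ((a • β + b • γ) i s) :=
        (hU i s).2 (hβ.nonneg i s) (hγ.nonneg i s) ha hb hab
  · simp only [Pi.add_apply, Pi.smul_apply, smul_eq_mul]
    rw [integral_add ((hg i).const_mul a) ((hh i).const_mul b), integral_const_mul,
      integral_const_mul]
    gcongr <;> [exact hz i; exact hz' i]

theorem not_forall_lt_of_mem_utilityPossibilitySet [Nonempty ι] {μ : Measure S}
    {U : ι → S → ℝ → ℝ} {Λ : S → ℝ} {x : ι → ℝ}
    (hpareto : ¬ ∃ β : ι → S → ℝ, (∀ i, Measurable (β i)) ∧ (∀ i s, 0 ≤ β i s) ∧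
      (∀ s, ∑ i, β i s = Λ s) ∧ (∀ i, (x i : EReal) ≤ eE μ (fun s => (U i s (β i s) : EReal))) ∧
      ∃ l, (x l : EReal) < eE μ (fun s => (U l s (β l s) : EReal)))
    {z : ι → ℝ} (hz : z ∈ utilityPossibilitySet μ U Λ) : ¬ ∀ i, x i < z i := by
  obtain ⟨β, g, hβ, hg, hgU, hzg⟩ := hz
  intro hxz
  have hlt : ∀ i, (x i : EReal) < eE μ (fun s => (U i s (β i s) : EReal)) := fun i =>
    (EReal.coe_lt_coe_iff.2 ((hxz i).trans_le (hzg i))).trans_le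
      (coe_integral_le_eE (hg i) (hgU i))
  exact hpareto ⟨β, hβ.measurable, hβ.nonneg, hβ.sum_eq, fun i => (hlt i).le,
    Classical.arbitrary ι, hlt _⟩

theorem exists_subset_measure_ne_zero_lt_top_bddAbove {μ : Measure S} [SigmaFinite μ]
    {B : Set S} (hB : MeasurableSet B) (hμB : μ B ≠ 0) {b : S → ℝ} (hb : Measurable b) :
    ∃ E ⊆ B, MeasurableSet E ∧ μ E ≠ 0 ∧ μ E < ⊤ ∧ ∃ C, ∀ s ∈ E, b s ≤ C := by
  set E : ℕ × ℕ → Set S := fun kn => B ∩ spanningSets μ kn.1 ∩ {s | b s ≤ kn.2}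
  have hcover : B ⊆ ⋃ kn, E kn := fun s hs => mem_iUnion.2
    ⟨(spanningSetsIndex μ s, ⌈b s⌉₊), ⟨hs, mem_spanningSetsIndex μ s⟩, Nat.le_ceil (b s)⟩
  obtain ⟨kn, hkn⟩ : ∃ kn, μ (E kn) ≠ 0 := by
    by_contra! h
    exact hμB (measure_mono_null hcover (measure_iUnion_null h))
  exact ⟨E kn, fun s hs => hs.1.1,
    (hB.inter (measurableSet_spanningSets μ _)).inter (measurableSet_le hb measurable_const), hkn,
    (measure_mono fun s hs => hs.1.2).trans_lt (measure_spanningSets_lt_top μ _), kn.2,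
    fun s hs => hs.2⟩

theorem setIntegral_lt_setIntegral_of_forall_mem_lt {μ : Measure S} {E : Set S}
    (hE : MeasurableSet E) (hE0 : μ E ≠ 0) {f g : S → ℝ} (hf : IntegrableOn f E μ)
    (hg : IntegrableOn g E μ) (hfg : ∀ s ∈ E, f s < g s) :
    ∫ s in E, f s ∂μ < ∫ s in E, g s ∂μ := by
  have hpos : 0 < ∫ s in E, (g s - f s) ∂μ := by
    rw [setIntegral_pos_iff_support_of_nonneg_ae
      ((ae_restrict_mem hE).mono fun s hs => (sub_pos.2 (hfg s hs)).le) (hg.sub hf),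
      inter_eq_right.2 fun s hs => Function.mem_support.2 (sub_pos.2 (hfg s hs)).ne']
    exact pos_iff_ne_zero.2 hE0
  rwa [integral_sub hg hf, sub_pos] at hpos

theorem sum_mul_integral_eq_integral_sum {μ : Measure S} {φ : ι → S → ℝ}
    (hφ : ∀ i, Integrable (φ i) μ) (w : ι → ℝ) :
    ∑ i, w i * ∫ s, φ i s ∂μ = ∫ s, ∑ i, w i * φ i s ∂μ := by
  rw [integral_finsetSum _ fun i _ => (hφ i).const_mul (w i)]
  simp_rw [integral_const_mul]

theorem ae_sum_mul_le_of_forall_sum_mul_integral_le {μ : Measure S} [SigmaFinite μ]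
    {U : ι → S → ℝ → ℝ} (hU : ∀ i, Measurable fun p : S × ℝ => U i p.1 p.2) {Λ : S → ℝ}
    {w : ι → ℝ} {α γ : ι → S → ℝ} (hα : IsAllocation Λ α)
    (hαint : ∀ i, Integrable (fun s => U i s (α i s)) μ) (hγ : IsAllocation Λ γ)
    (hmax : ∀ β, IsAllocation Λ β → (∀ i, Integrable (fun s => U i s (β i s)) μ) →
      ∑ i, w i * ∫ s, U i s (β i s) ∂μ ≤ ∑ i, w i * ∫ s, U i s (α i s) ∂μ) :
    ∀ᵐ s ∂μ, ∑ i, w i * U i s (γ i s) ≤ ∑ i, w i * U i s (α i s) := by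
  classical
  set F := fun s => ∑ i, w i * U i s (α i s)
  set G := fun s => ∑ i, w i * U i s (γ i s)
  have hUγ : ∀ i, Measurable fun s => U i s (γ i s) := fun i =>
    (hU i).comp (measurable_id.prodMk (hγ.measurable i))
  have hF : Integrable F μ := integrable_finsetSum _ fun i _ => (hαint i).const_mul _
  have hFm : Measurable F := Finset.measurable_sum _ fun i _ =>
    ((hU i).comp (measurable_id.prodMk (hα.measurable i))).const_mul _
  have hGm : Measurable G := Finset.measurable_sum _ fun i _ => (hUγ i).const_mul _
  rw [ae_iff]
  by_contra hB
  obtain ⟨E, hEB, hE, hE0, hEfin, C, hC⟩ := exists_subset_measure_ne_zero_lt_top_bddAbove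
    (measurableSet_le hGm hFm).compl hB (Finset.measurable_sum _ fun i _ => (hUγ i).abs)
  have hγE : ∀ i, IntegrableOn (fun s => U i s (γ i s)) E μ := fun i =>
    Measure.integrableOn_of_bounded hEfin.ne (hUγ i).aestronglyMeasurable
      ((ae_restrict_mem hE).mono fun s hs => (single_le_sum (f := fun i => |U i s (γ i s)|)
        (fun i _ => abs_nonneg _) (mem_univ i)).trans (hC s hs))
  have hGE : IntegrableOn G E μ := integrable_finsetSum _ fun i _ => (hγE i).const_mul _
  -- the allocation that follows `γ` on `E`, where `γ` is strictly better than `α`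
  set β := fun i => E.piecewise (γ i) (α i)
  have hβU : ∀ i, (fun s => U i s (β i s)) =
      E.piecewise (fun s => U i s (γ i s)) (fun s => U i s (α i s)) := fun i => by
    ext s; by_cases hs : s ∈ E <;> simp [β, hs]
  have hβint : ∀ i, Integrable (fun s => U i s (β i s)) μ := fun i => by
    rw [hβU]; exact Integrable.piecewise hE (hγE i) (hαint i).integrableOn
  have hle : ∫ s in E, G s ∂μ ≤ ∫ s in E, F s ∂μ := by
    have key := hmax β (hγ.piecewise hα hE) hβint
    rw [sum_mul_integral_eq_integral_sum hβint, sum_mul_integral_eq_integral_sum hαint] at key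
    have hpw : (fun s => ∑ i, w i * U i s (β i s)) = E.piecewise G F := by
      ext s; by_cases hs : s ∈ E <;> simp [β, G, F, hs]
    rw [hpw, integral_piecewise hE hGE hF.integrableOn, ← integral_add_compl hE hF] at key
    linarith
  exact hle.not_gt (setIntegral_lt_setIntegral_of_forall_mem_lt hE hE0 hF.integrableOn hGE
    fun s hs => not_le.1 (hEB hs))

end

/-- Every Pareto optimal allocation `(α^m)` of `Λ` (with integrable
utilities) is, for some simplex weight `w`, μ-a.e. equal to the pointwise maximizer
`(π^m(w,Λ))` of the weighted aggregate utility. -/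
theorem pointwise_maximizer_of_pareto_optimal
    {S : Type*} [MeasurableSpace S] (μ : Measure S) [SigmaFinite μ]
    (M : ℕ) (hM : 0 < M) (Λ : S → ℝ) (hΛm : Measurable Λ) (hΛpos : ∀ s, 0 < Λ s)
    (U U' : Fin M → S → ℝ → ℝ)
    (hUmeas : ∀ m, Measurable (fun p : S × ℝ => U m p.1 p.2))
    (hU : ∀ m, ∀ s, StandingAssumptions (U m s) (U' m s))
    (hU0 : ∀ m, ∀ s, ∀ c : ℝ, 0 < c → U m s 0 ≤ U m s c)
    (α : Fin M → S → ℝ) (hαm : ∀ m, Measurable (α m))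
    (hαpos : ∀ m, ∀ s, 0 ≤ α m s) (hαsum : ∀ s, ∑ m, α m s = Λ s)
    (hαint : ∀ m, Integrable (fun s => U m s (α m s)) μ)
    (hpareto : ¬ ∃ β : Fin M → S → ℝ, (∀ m, Measurable (β m)) ∧
      (∀ m, ∀ s, 0 ≤ β m s) ∧ (∀ s, ∑ m, β m s = Λ s) ∧
      (∀ m, ((∫ s, U m s (α m s) ∂μ : ℝ) : EReal) ≤ eE μ (fun s => (U m s (β m s) : EReal))) ∧
      (∃ l, ((∫ s, U l s (α l s) ∂μ : ℝ) : EReal) < eE μ (fun s => (U l s (β l s) : EReal)))) :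
    ∃ w ∈ stdSimplex ℝ (Fin M),
      (∀ m, w m = 0 → ∀ᵐ s ∂μ, α m s = 0) ∧
      (∀ᵐ s ∂μ, ∀ q : Fin M → ℝ, (∀ m, 0 ≤ q m) → (∑ m, q m = Λ s) →
        ∑ m, w m * U m s (q m) ≤ ∑ m, w m * U m s (α m s)) := by
  have : Nonempty (Fin M) := ⟨⟨0, hM⟩⟩
  have hconc : ∀ m s, ConcaveOn ℝ (Ici 0) (U m s) := fun m s => (hU m s).concaveOn_Ici (hU0 m s)
  have hα : IsAllocation Λ α := ⟨hαm, hαpos, hαsum⟩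
  obtain ⟨w, hw, hwx⟩ := exists_mem_stdSimplex_sum_mul_le_of_not_lt
    (convex_utilityPossibilitySet hconc)
    ⟨_, α, _, hα, hαint, fun _ _ => le_rfl, fun _ => le_rfl⟩
    fun z hz => not_forall_lt_of_mem_utilityPossibilitySet hpareto hz
  have hmax : ∀ β, IsAllocation Λ β → (∀ m, Integrable (fun s => U m s (β m s)) μ) →
      ∑ m, w m * ∫ s, U m s (β m s) ∂μ ≤ ∑ m, w m * ∫ s, U m s (α m s) ∂μ :=
    fun β hβ hβint => hwx _ ⟨β, _, hβ, hβint, fun _ _ => le_rfl, fun _ => le_rfl⟩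
  obtain ⟨t, hts, htc, hdense⟩ := (TopologicalSpace.IsSeparable.of_separableSpace
    (positiveStdSimplex (Fin M))).exists_countable_dense_subset
  have hdense_le : ∀ᵐ s ∂μ, ∀ p ∈ t, ∑ m, w m * U m s (Λ s * p m) ≤ ∑ m, w m * U m s (α m s) :=
    (ae_ball_iff htc).2 fun p hp => ae_sum_mul_le_of_forall_sum_mul_integral_le hUmeas hα hαint
      (IsAllocation.mul_of_mem_stdSimplex hΛm (fun s => (hΛpos s).le)
        ⟨fun m => ((hts hp).1 m).le, (hts hp).2⟩) hmax
  have hopt : ∀ᵐ s ∂μ, ∀ q : Fin M → ℝ, (∀ m, 0 ≤ q m) → (∑ m, q m = Λ s) →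
      ∑ m, w m * U m s (q m) ≤ ∑ m, w m * U m s (α m s) :=
    hdense_le.mono fun s hs q hq hqΛ => sum_mul_le_of_forall_mem_dense_le
      (fun m => (hU m s).continuousOn) (fun m => hconc m s) hw.1 (hΛpos s) hdense hs hq hqΛ
  refine ⟨w, hw, fun m hm => hopt.mono fun s hs => ?_, hopt⟩
  exact eq_zero_of_weight_eq_zero_of_forall_sum_mul_le
    (fun i => (hU i s).strictMonoOn_Ici (hU0 i s)) hw (hαpos · s)
    (fun q hq hqα => hs q hq (hqα.trans (hαsum s))) hm
end

section
/- Let h_1,...,h_M : int ℝ^M_+ → ℝ be functions such that: (i) each h_m is 0-homogeneous (h_m(yw) = h_m(w) for y > 0); and (ii) for every m ≠ m_0 (a fixed index), h_m(w^1,...,w^M) is strictly decreasing in w^l for each l ≠ m (gross-substitute property). Then the system h_m(w) = 0 for all m = 1,...,M has at most one solution w in the interior of the simplex Σ^M. -/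
/-!
Suppose `w₁ ≠ w₂` are zeros in the open simplex with `w₁ m₀ ≤ w₂ m₀`, and let `y` be the largest
ratio `w₁ l / w₂ l`, attained at `l₀`. Then `y > 1` (otherwise `w₁ ≤ w₂` with equal sums), so
`l₀ ≠ m₀`, and `y • w₂` dominates `w₁`, agrees with it at `l₀` and exceeds it at `m₀`. Raising
the coordinates of `w₁` other than `l₀` one by one up to `y • w₂` never raises `h l₀`, and
lowers it strictly at `m₀`, so `0 = h l₀ w₂ = h l₀ (y • w₂) < h l₀ w₁ = 0`.
-/

open Finset

variable {ι : Type*}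

def GrossSubstitutes (f : (ι → ℝ) → ℝ) (m : ι) : Prop :=
  ∀ l, l ≠ m → ∀ u v : ι → ℝ, (∀ k, 0 < u k) → (∀ k, 0 < v k) →
    (∀ k, k ≠ l → u k = v k) → u l < v l → f v < f u

namespace GrossSubstitutes

variable {f : (ι → ℝ) → ℝ} {m : ι}

theorem apply_update_le (hf : GrossSubstitutes f m) [DecidableEq ι] {u : ι → ℝ}
    (hu : ∀ k, 0 < u k) {l : ι} (hl : l ≠ m) {x : ℝ} (hx : u l ≤ x) :
    f (Function.update u l x) ≤ f u := by
  rcases hx.lt_or_eq with hlt | rfl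
  · refine (hf l hl u _ hu (fun k => ?_) (fun k hk => ?_) (by simpa using hlt)).le
    · rcases eq_or_ne k l with rfl | hk
      · simpa using (hu k).trans hlt
      · simpa [hk] using hu k
    · simp [hk]
  · simp

theorem apply_le_of_le [Fintype ι] (hf : GrossSubstitutes f m) {a b : ι → ℝ}
    (ha : ∀ k, 0 < a k) (hab : a ≤ b) (hm : a m = b m) : f b ≤ f a := by
  classical
  suffices ∀ s : Finset ι, m ∉ s → f (s.piecewise b a) ≤ f a by
    simpa [hm] using this (univ.erase m) (notMem_erase m univ)
  intro s
  induction s using Finset.induction_on with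
  | empty => simp
  | insert j s hj ih =>
    intro hms
    have hjm : j ≠ m := fun h => hms (h ▸ mem_insert_self j s)
    have hpos : ∀ k, 0 < s.piecewise b a k :=
      fun k => (ha k).trans_le (le_piecewise_of_le_of_le s hab le_rfl k)
    rw [piecewise_insert]
    refine (hf.apply_update_le hpos hjm ?_).trans (ih (fun h => hms (mem_insert_of_mem h)))
    rw [piecewise_eq_of_notMem s b a hj]
    exact hab j

theorem apply_lt_of_le [Fintype ι] (hf : GrossSubstitutes f m) {a b : ι → ℝ}
    (ha : ∀ k, 0 < a k) (hab : a ≤ b) (hm : a m = b m) {l : ι} (hl : a l < b l) :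
    f b < f a := by
  classical
  have hlm : l ≠ m := by rintro rfl; exact hl.ne hm
  set c := Function.update a l (b l)
  have hc : ∀ k, 0 < c k :=
    fun k => (ha k).trans_le (le_update_iff.2 ⟨hl.le, fun _ _ => le_rfl⟩ k)
  have hcb : c ≤ b := update_le_iff.2 ⟨le_rfl, fun k _ => hab k⟩
  calc f b ≤ f c := hf.apply_le_of_le hc hcb (by simp [c, hlm.symm, hm])
    _ < f a := hf l hlm a c ha hc (fun k hk => by simp [c, hk]) (by simpa [c] using hl)

end GrossSubstitutes

theorem exists_eq_mul_of_le_mul [Finite ι] [Nonempty ι] (u : ι → ℝ) {v : ι → ℝ}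
    (hv : ∀ k, 0 < v k) : ∃ y l, u l = y * v l ∧ ∀ k, u k ≤ y * v k := by
  obtain ⟨l, hl⟩ := Finite.exists_max fun k => u k / v k
  exact ⟨u l / v l, l, (div_mul_cancel₀ _ (hv l).ne').symm,
    fun k => (div_le_iff₀ (hv k)).1 (hl k)⟩

/-- If `h_1,...,h_M` are `0`-homogeneous on the strictly positive
orthant and every `h_m` with `m ≠ m₀` is strictly decreasing in each coordinate
`w^l`, `l ≠ m` (gross-substitute property), then the system `h_m(w) = 0`,
`m = 1,...,M`, has at most one solution in the interior of the simplex. -/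
theorem excess_utility_unique_zero
    (M : ℕ) (m₀ : Fin M) (h : Fin M → (Fin M → ℝ) → ℝ)
    (hhom : ∀ m, ∀ y : ℝ, 0 < y → ∀ w : Fin M → ℝ, (∀ l, 0 < w l) →
      h m (fun l => y * w l) = h m w)
    (hgs : ∀ m, m ≠ m₀ → ∀ l, l ≠ m → ∀ w₁ w₂ : Fin M → ℝ,
      (∀ k, 0 < w₁ k) → (∀ k, 0 < w₂ k) →
      (∀ k, k ≠ l → w₁ k = w₂ k) → w₁ l < w₂ l → h m w₂ < h m w₁) :
    ∀ w₁ w₂ : Fin M → ℝ,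
      (∀ l, 0 < w₁ l) → (∑ l, w₁ l = 1) → (∀ l, 0 < w₂ l) → (∑ l, w₂ l = 1) →
      (∀ m, h m w₁ = 0) → (∀ m, h m w₂ = 0) → w₁ = w₂ := by
  intro w₁ w₂ hw₁ hs₁ hw₂ hs₂ hz₁ hz₂
  wlog hle : w₁ m₀ ≤ w₂ m₀ generalizing w₁ w₂
  · exact (this w₂ w₁ hw₂ hs₂ hw₁ hs₁ hz₂ hz₁ (le_of_not_ge hle)).symm
  have : Nonempty (Fin M) := ⟨m₀⟩
  obtain ⟨y, l₀, hl₀, hy⟩ := exists_eq_mul_of_le_mul w₁ hw₂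
  by_contra hne
  have hy₁ : 1 < y := by
    by_contra! hy₁
    have hle₂ : ∀ k, w₁ k ≤ w₂ k :=
      fun k => (hy k).trans (mul_le_of_le_one_left (hw₂ k).le hy₁)
    have hsum := (sum_eq_sum_iff_of_le fun k _ => hle₂ k).1 (hs₁.trans hs₂.symm)
    exact hne (funext fun k => hsum k (mem_univ k))
  have hm₀ : w₁ m₀ < y * w₂ m₀ := hle.trans_lt (lt_mul_of_one_lt_left (hw₂ m₀) hy₁)
  have hl₀m₀ : l₀ ≠ m₀ := by rintro rfl; exact hm₀.ne hl₀
  have hlt := GrossSubstitutes.apply_lt_of_le (hgs l₀ hl₀m₀) (b := fun k => y * w₂ k)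
    hw₁ hy hl₀ hm₀
  rw [hhom l₀ y (zero_lt_one.trans hy₁) w₂ hw₂, hz₁, hz₂] at hlt
  exact hlt.false
end

section
/- Let U : (0,∞) → ℝ be strictly concave, strictly increasing, continuously differentiable with the Inada conditions, and extend U to 0 by continuity (possibly −∞). Suppose α > 0 and η > 0 are measurable on a σ-finite measure space with E[η] < ∞ and E[|U(α)|] < ∞. Define β pointwise by U(α) − U(α−β) = min(η, U(2α) − U(α)). Then β is well-defined and measurable with 0 < β < α, E[U(α−β)] > −∞, and U'(α)β ≤ U(α) − U(α−β) pointwise, hence E[U'(α)β] < ∞. -/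
open MeasureTheory

open Set Filter Topology

/-!
Strict concavity gives `U (2a) - U a < U a - U x` for some `x ∈ (0, a)`: the secant slope on
`[x, a]` tends, as `x → 0`, to at least the slope on `[a/2, a]`, which exceeds the slope on
`[a, 2a]`. Hence, by the intermediate value theorem, `U` attains the level `U a - m` for
`0 < m ≤ U (2a) - U a` at a point `y ∈ (0, a)`, unique by strict monotonicity, and `β = α - y`.
As `U` is strictly increasing, `{y < q} = {U y < U q}`, so `y` is measurable because
`U y = U α - m` is. The tangent of the concave `U` at `α` gives `0 ≤ U' α * β ≤ m ≤ η`.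
-/

lemma ContinuousOn.measurable_comp {X Y S : Type*} [TopologicalSpace X] [MeasurableSpace X]
    [OpensMeasurableSpace X] [TopologicalSpace Y] [MeasurableSpace Y] [BorelSpace Y]
    [MeasurableSpace S] {f : X → Y} {s : Set X} (hf : ContinuousOn f s) {g : S → X}
    (hg : Measurable g) (hgs : ∀ x, g x ∈ s) : Measurable fun x => f (g x) :=
  hf.domRestrict.measurable.comp (hg.subtype_mk (h := hgs))

lemma StrictMonoOn.measurable_of_measurable_comp {S : Type*} [MeasurableSpace S] {U : ℝ → ℝ}
    {a : ℝ} (hU : StrictMonoOn U (Ioi a)) {y : S → ℝ} (hy : ∀ s, a < y s)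
    (hUy : Measurable fun s => U (y s)) : Measurable y := by
  refine measurable_of_Iio fun q => ?_
  rcases le_or_gt q a with hq | hq
  · rw [show y ⁻¹' Iio q = ∅ from
      eq_empty_of_forall_notMem fun s (hs : y s < q) => (hy s).not_ge (hs.le.trans hq)]
    exact MeasurableSet.empty
  · have hpre : y ⁻¹' Iio q = {s | U (y s) < U q} := by
      ext s
      exact (hU.lt_iff_lt (hy s) hq).symm
    rw [hpre]
    exact measurableSet_lt hUy measurable_const

lemma StrictConcaveOn.exists_sub_lt_sub {U : ℝ → ℝ} (hU : StrictConcaveOn ℝ (Ioi 0) U) {a : ℝ}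
    (ha : 0 < a) : ∃ x ∈ Ioo 0 a, U (2 * a) - U a < U a - U x := by
  set σ := (U a - U (a / 2)) / (a - a / 2) with hσ
  have hslope : (U (2 * a) - U a) / (2 * a - a) < σ :=
    hU.slope_anti_adjacent (show 0 < a / 2 by positivity) (show 0 < 2 * a by positivity)
      (by linarith) (by linarith)
  have hgap : U (2 * a) - U a < σ * a := by
    rwa [show 2 * a - a = a by ring, div_lt_iff₀ ha] at hslope
  have hsecant : ∀ x ∈ Ioo 0 (a / 2), σ * (a - x) ≤ U a - U x := by
    rintro x ⟨hx0, hx⟩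
    have h := hU.concaveOn.slope_anti_adjacent (mem_Ioi.2 hx0) (mem_Ioi.2 ha) hx (by linarith)
    rw [← hσ, le_div_iff₀ (by linarith)] at h
    have hσa : σ * (a / 2) = U a - U (a / 2) := by
      rw [hσ, show a - a / 2 = a / 2 by ring, div_mul_cancel₀ _ (by positivity)]
    linarith
  have hlim : Tendsto (fun x => σ * (a - x)) (𝓝[>] 0) (𝓝 (σ * a)) := by
    have : Continuous fun x : ℝ => σ * (a - x) := by fun_prop
    simpa using this.continuousWithinAt.tendsto (x := 0) (s := Ioi 0)
  obtain ⟨x, hxgap, hx⟩ := ((hlim.eventually (lt_mem_nhds hgap)).and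
    (Ioo_mem_nhdsGT (by positivity : (0 : ℝ) < a / 2))).exists
  exact ⟨x, ⟨hx.1, by linarith [hx.2]⟩, hxgap.trans_le (hsecant x hx)⟩

lemma StrictConcaveOn.exists_mem_Ioo_eq_sub {U : ℝ → ℝ} (hU : StrictConcaveOn ℝ (Ioi 0) U)
    (hcont : ContinuousOn U (Ioi 0)) {a m : ℝ} (ha : 0 < a) (hm : 0 < m)
    (hma : m ≤ U (2 * a) - U a) : ∃ y ∈ Ioo 0 a, U y = U a - m := by
  obtain ⟨x, hx, hgap⟩ := hU.exists_sub_lt_sub ha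
  obtain ⟨y, hy, hUy⟩ := intermediate_value_Ico hx.2.le
    (hcont.mono fun t ht => hx.1.trans_le ht.1)
    (show U a - m ∈ Ico (U x) (U a) from ⟨by linarith, by linarith⟩)
  exact ⟨y, ⟨hx.1.trans_le hy.1, hy.2⟩, hUy⟩

lemma ConcaveOn.mul_sub_le_of_hasDerivAt {s : Set ℝ} {f : ℝ → ℝ} {f' x y : ℝ}
    (hf : ConcaveOn ℝ s f) (hx : x ∈ s) (hy : y ∈ s) (hxy : x < y) (hf' : HasDerivAt f f' y) :
    f' * (y - x) ≤ f y - f x := by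
  have h := hf.le_slope_of_hasDerivAt hx hy hxy hf'
  rwa [slope_def_field, le_div_iff₀ (sub_pos.2 hxy)] at h

section Utility

variable {U U' : ℝ → ℝ} {x y : ℝ}

lemma StandingAssumptions.continuousOn_s16 (hU : StandingAssumptions U U') :
    ContinuousOn U (Ioi 0) :=
  fun c hc => (hU.2.2.1 c hc).continuousAt.continuousWithinAt

lemma StandingAssumptions.deriv_pos_s16 (hU : StandingAssumptions U U') (hy : 0 < y) :
    0 < U' y := by
  have h := hU.2.1.concaveOn.slope_le_of_hasDerivAt hy (by linarith : 0 < 2 * y)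
    (by linarith) (hU.2.2.1 y hy)
  have hincr : U y < U (2 * y) := hU.1 hy (by linarith : (0 : ℝ) < 2 * y) (by linarith)
  rw [slope_def_field] at h
  exact (div_pos (sub_pos.2 hincr) (by linarith)).trans_le h

lemma StandingAssumptions.abs_deriv_mul_sub_le (hU : StandingAssumptions U U') (hx : 0 < x)
    (hxy : x < y) : |U' y * (y - x)| ≤ U y - U x := by
  rw [abs_of_pos (mul_pos (hU.deriv_pos_s16 (hx.trans hxy)) (sub_pos.2 hxy))]
  exact hU.2.1.concaveOn.mul_sub_le_of_hasDerivAt hx (hx.trans hxy) hxy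
    (hU.2.2.1 y (hx.trans hxy))

end Utility

theorem test_direction_construction_general
    {S : Type*} [MeasurableSpace S] (μ : Measure S)
    (U U' : ℝ → ℝ) (hU : StandingAssumptions U U')
    (α η : S → ℝ) (hαm : Measurable α) (hηm : Measurable η)
    (hαpos : ∀ s, 0 < α s) (hηpos : ∀ s, 0 < η s)
    (hηint : Integrable η μ)
    (hUαint : Integrable (fun s => |U (α s)|) μ) :
    ∃ β : S → ℝ, Measurable β ∧
      (∀ s, 0 < β s ∧ β s < α s) ∧
      (∀ s, U (α s) - U (α s - β s) = min (η s) (U (2 * α s) - U (α s))) ∧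
      (∀ s, ∀ b : ℝ, 0 < b → b < α s →
        U (α s) - U (α s - b) = min (η s) (U (2 * α s) - U (α s)) → b = β s) ∧
      Integrable (fun s => min (U (α s - β s)) 0) μ ∧
      (∀ s, U' (α s) * β s ≤ U (α s) - U (α s - β s)) ∧
      Integrable (fun s => U' (α s) * β s) μ := by
  have ⟨hmono, hconc, _, hU'cont, _⟩ := hU
  set m : S → ℝ := fun s => min (η s) (U (2 * α s) - U (α s))
  have h2α : ∀ s, 0 < 2 * α s := fun s => by linarith [hαpos s]
  have hm_pos : ∀ s, 0 < m s := fun s =>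
    lt_min (hηpos s) (sub_pos.2 (hmono (hαpos s) (h2α s) (by linarith [hαpos s])))
  choose y hy hUy using fun s =>
    hconc.exists_mem_Ioo_eq_sub hU.continuousOn_s16 (hαpos s) (hm_pos s) (min_le_right _ _)
  have hUα_meas : Measurable fun s => U (α s) := hU.continuousOn_s16.measurable_comp hαm hαpos
  have hm_meas : Measurable m :=
    hηm.min ((hU.continuousOn_s16.measurable_comp (hαm.const_mul 2) h2α).sub hUα_meas)
  have hy_meas : Measurable y := hmono.measurable_of_measurable_comp (fun s => (hy s).1)
    (by simp only [hUy]; exact hUα_meas.sub hm_meas)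
  have hm_int : Integrable m μ := hηint.mono hm_meas.aestronglyMeasurable (ae_of_all _ fun s => by
    simpa only [Real.norm_of_nonneg (hm_pos s).le, Real.norm_of_nonneg (hηpos s).le]
      using min_le_left (η s) _)
  have hUy_int : Integrable (fun s => U (y s)) μ := by
    simp only [hUy]
    exact ((integrable_norm_iff hUα_meas.aestronglyMeasurable).1 hUαint).sub hm_int
  refine ⟨fun s => α s - y s, ?_⟩
  simp only [sub_sub_cancel]
  refine ⟨hαm.sub hy_meas, fun s => ⟨by linarith [(hy s).2], by linarith [(hy s).1]⟩,
    fun s => by linarith [hUy s], fun s b hb0 hbα hb => ?_, hUy_int.inf (integrable_zero S ℝ μ),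
    fun s => (le_abs_self _).trans (hU.abs_deriv_mul_sub_le (hy s).1 (hy s).2), hm_int.mono
      ((hU'cont.measurable_comp hαm hαpos).mul (hαm.sub hy_meas)).aestronglyMeasurable
      (ae_of_all _ fun s => ?_)⟩
  · have : α s - b = y s := hmono.injOn (show 0 < α s - b by linarith) (hy s).1 (by linarith [hUy s])
    linarith
  · rw [Real.norm_eq_abs, Real.norm_of_nonneg (hm_pos s).le,
      show m s = U (α s) - U (y s) by linarith [hUy s]]
    exact hU.abs_deriv_mul_sub_le (hy s).1 (hy s).2

/-- Construction of the test direction `β`: given measurable `α > 0`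
and `η > 0` with `E[η] < ∞` and `E[|U(α)|] < ∞`, the equation
`U(α) − U(α−β) = min(η, U(2α) − U(α))` has a unique pointwise solution
`β ∈ (0, α)`, which is measurable, satisfies `E[U(α−β)] > −∞` (the negative part of
`U(α−β)` is integrable), the pointwise bound `U'(α)β ≤ U(α) − U(α−β)`, and hence
`E[U'(α)β] < ∞`. -/
theorem test_direction_construction
    {S : Type*} [MeasurableSpace S] (μ : Measure S) [SigmaFinite μ]
    (U U' : ℝ → ℝ) (hU : StandingAssumptions U U')
    (α η : S → ℝ) (hαm : Measurable α) (hηm : Measurable η)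
    (hαpos : ∀ s, 0 < α s) (hηpos : ∀ s, 0 < η s)
    (hηint : Integrable η μ)
    (hUαint : Integrable (fun s => |U (α s)|) μ) :
    ∃ β : S → ℝ, Measurable β ∧
      (∀ s, 0 < β s ∧ β s < α s) ∧
      (∀ s, U (α s) - U (α s - β s) = min (η s) (U (2 * α s) - U (α s))) ∧
      (∀ s, ∀ b : ℝ, 0 < b → b < α s →
        U (α s) - U (α s - b) = min (η s) (U (2 * α s) - U (α s)) → b = β s) ∧
      Integrable (fun s => min (U (α s - β s)) 0) μ ∧
      (∀ s, U' (α s) * β s ≤ U (α s) - U (α s - β s)) ∧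
      Integrable (fun s => U' (α s) * β s) μ :=
  test_direction_construction_general μ U U' hU α η hαm hηm hαpos hηpos hηint hUαint
end
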